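/- arXiv:1603.05465 — 14 statements merged into one kernel-verified Lean document; each statement's English description precedes it below -/
import Mathlib

section
/- The Young function Ψ₂(y) = (1+|y|)·log(1+|y|) − |y| satisfies the generalized Δ₂ condition: for every β ≥ 0 and every y ∈ ℝ, Ψ₂(β y) ≤ max(β², 1) · Ψ₂(y). -/
/-!
Write `Ψ₂(y) = F(|y|)` with `F(t) = (1 + t) log(1 + t) - t`, so that `F(0) = 0` and
`F'(t) = log(1 + t) ≥ 0`. For `β ≤ 1` the bound is monotonicity of `F`. For `β ≥ 1`, the
difference `β² F(t) - F(β t)` vanishes at `0` and has derivative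
`β (β log(1 + t) - log(1 + β t)) ≥ 0` by Bernoulli's inequality `1 + β t ≤ (1 + t)^β`.
-/

open Real Set

lemma monotoneOn_Ici_of_hasDerivAt {f f' : ℝ → ℝ} {a : ℝ}
    (hf : ∀ x, a ≤ x → HasDerivAt f (f' x) x) (hf' : ∀ x, a < x → 0 ≤ f' x) :
    MonotoneOn f (Ici a) :=
  monotoneOn_of_hasDerivWithinAt_nonneg (convex_Ici a)
    (fun x hx => (hf x hx).continuousAt.continuousWithinAt)
    (fun x hx => (hf x (interior_subset hx)).hasDerivWithinAt)
    (fun x hx => hf' x (by rwa [interior_Ici] at hx))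

lemma log_one_add_mul_le_mul_log_one_add {p x : ℝ} (hp : 1 ≤ p) (hpx : 0 < 1 + p * x) :
    log (1 + p * x) ≤ p * log (1 + x) := by
  have hx : -1 ≤ x := by nlinarith
  rcases hx.lt_or_eq with hx | rfl
  · calc log (1 + p * x) ≤ log ((1 + x) ^ p) :=
          log_le_log hpx (one_add_mul_self_le_rpow_one_add hx.le hp)
      _ = p * log (1 + x) := log_rpow (by linarith) p
  · nlinarith

noncomputable def youngPsi2 (t : ℝ) : ℝ := (1 + t) * log (1 + t) - t

lemma youngPsi2_zero : youngPsi2 0 = 0 := by simp [youngPsi2]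

lemma hasDerivAt_youngPsi2 {t : ℝ} (ht : -1 < t) :
    HasDerivAt youngPsi2 (log (1 + t)) t := by
  have hpos : 1 + t ≠ 0 := by linarith
  have hshift : HasDerivAt (fun x : ℝ => 1 + x) 1 t := (hasDerivAt_id t).const_add 1
  have h : HasDerivAt (fun x => (1 + x) * log (1 + x) - x)
      (1 * log (1 + t) + (1 + t) * (1 / (1 + t)) - 1) t :=
    (hshift.mul (hshift.log hpos)).sub (hasDerivAt_id t)
  refine h.congr_deriv ?_
  field_simp
  ring

lemma youngPsi2_monotoneOn : MonotoneOn youngPsi2 (Ici 0) :=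
  monotoneOn_Ici_of_hasDerivAt (fun _ hx => hasDerivAt_youngPsi2 (by linarith))
    (fun _ hx => log_nonneg (by linarith))

lemma youngPsi2_mul_le_sq_mul {β : ℝ} (hβ : 1 ≤ β) {t : ℝ} (ht : 0 ≤ t) :
    youngPsi2 (β * t) ≤ β ^ 2 * youngPsi2 t := by
  have hderiv : ∀ x, 0 ≤ x → HasDerivAt (fun x => β ^ 2 * youngPsi2 x - youngPsi2 (β * x))
      (β * (β * log (1 + x) - log (1 + β * x))) x := fun x hx => by
    have hscaled : HasDerivAt (fun x => youngPsi2 (β * x)) (log (1 + β * x) * (β * 1)) x :=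
      (hasDerivAt_youngPsi2 (by nlinarith)).comp x ((hasDerivAt_id x).const_mul β)
    refine (((hasDerivAt_youngPsi2 (by linarith)).const_mul (β ^ 2)).sub hscaled).congr_deriv ?_
    ring
  have hmono := monotoneOn_Ici_of_hasDerivAt hderiv fun x hx =>
    mul_nonneg (by linarith) <| sub_nonneg.2 <|
      log_one_add_mul_le_mul_log_one_add hβ (by nlinarith)
  have hle := hmono self_mem_Ici ht ht
  simp only [mul_zero, youngPsi2_zero, sub_zero] at hle
  linarith

/-- The Young function `Ψ₂(y) = (1+|y|)·log(1+|y|) − |y|` satisfies the generalized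
`Δ₂` condition: `Ψ₂(β y) ≤ max(β², 1) · Ψ₂(y)` for every `β ≥ 0` and `y`. -/
theorem psi2_generalized_delta2
    (Ψ₂ : ℝ → ℝ) (hΨ₂ : ∀ y, Ψ₂ y = (1 + |y|) * Real.log (1 + |y|) - |y|) :
    ∀ β : ℝ, 0 ≤ β → ∀ y : ℝ, Ψ₂ (β * y) ≤ max (β ^ 2) 1 * Ψ₂ y := by
  intro β hβ y
  have hΨ₂_eq : ∀ z, Ψ₂ z = youngPsi2 |z| := hΨ₂
  rw [hΨ₂_eq, hΨ₂_eq, abs_mul, abs_of_nonneg hβ]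
  have hy := abs_nonneg y
  rcases le_total β 1 with hβ1 | hβ1
  · rw [max_eq_right (by nlinarith), one_mul]
    exact youngPsi2_monotoneOn (mul_nonneg hβ hy) hy (mul_le_of_le_one_left hy hβ1)
  · rw [max_eq_left (by nlinarith)]
    exact youngPsi2_mul_le_sq_mul hβ1 hy
end

section
/- Let (X, F, μ) be a probability space and p, q be strictly positive probability densities with respect to μ. If the Kullback–Leibler divergence D(q‖p) = ∫ q·log(q/p) dμ is finite and u : X → ℝ satisfies ∫ (cosh(α·u) − 1)·p dμ < ∞ for some α > 0, then u is integrable with respect to the measure q·dμ. -/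
/-!
The pairing `q · t` of a density with a function is controlled by the Fenchel–Young inequality
`q t ≤ q log (q / p) + p eᵗ` (the Legendre duality between relative entropy and `exp`).
Taking `t = α |u|` and using `e^{|y|} ≤ 2 cosh y`, the function `α |u| q` is dominated pointwise by
`q log (q / p) + 2 (cosh (α u) - 1) p + 2 p`, which is integrable because `D(q‖p)` is finite,
`u` lies in the Orlicz class of `p` and `p` is a density.
-/

open MeasureTheory Real

namespace Real

theorem mul_le_mul_log_div_add_mul_exp {p q : ℝ} (hp : 0 < p) (hq : 0 < q) (t : ℝ) :
    q * t ≤ q * log (q / p) + p * exp t := by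
  have hyoung : t - log (q / p) + 1 ≤ p * exp t / q := by
    have h := add_one_le_exp (t - log (q / p))
    rwa [exp_sub, exp_log (by positivity), div_div_eq_mul_div, mul_comm] at h
  rw [le_div_iff₀ hq] at hyoung
  nlinarith

theorem exp_abs_le_two_mul_cosh (y : ℝ) : exp |y| ≤ 2 * cosh y := by
  rw [← cosh_abs, cosh_eq]
  linarith [exp_pos (-|y|)]

theorem abs_mul_le_inv_mul_log_div_add_cosh {p q α : ℝ} (hp : 0 < p) (hq : 0 < q) (hα : 0 < α)
    (y : ℝ) :
    |y * q| ≤ α⁻¹ * (q * log (q / p) + 2 * ((cosh (α * y) - 1) * p) + 2 * p) := by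
  have hyoung := mul_le_mul_log_div_add_mul_exp hp hq (α * |y|)
  have hcosh : exp (α * |y|) ≤ 2 * cosh (α * y) := by
    simpa only [abs_mul, abs_of_pos hα] using exp_abs_le_two_mul_cosh (α * y)
  rw [abs_mul, abs_of_pos hq, le_inv_mul_iff₀ hα]
  nlinarith

end Real

theorem integrable_of_orlicz_and_finite_divergence_general
    {X : Type*} [MeasurableSpace X] (μ : Measure X)
    (p q u : X → ℝ) (hq : Measurable q) (hu : Measurable u)
    (hp_pos : ∀ᵐ x ∂μ, 0 < p x) (hq_pos : ∀ᵐ x ∂μ, 0 < q x)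
    (hp_int : ∫ x, p x ∂μ = 1)
    (hD : Integrable (fun x => q x * Real.log (q x / p x)) μ)
    (hOrlicz : ∃ α > (0 : ℝ), Integrable (fun x => (Real.cosh (α * u x) - 1) * p x) μ) :
    Integrable (fun x => u x * q x) μ := by
  obtain ⟨α, hα, hcosh⟩ := hOrlicz
  have hpI : Integrable p μ := .of_integral_ne_zero (by simp [hp_int])
  have hbound : Integrable (fun x =>
      α⁻¹ * (q x * log (q x / p x) + 2 * ((cosh (α * u x) - 1) * p x) + 2 * p x)) μ :=
    ((hD.add (hcosh.const_mul 2)).add (hpI.const_mul 2)).const_mul _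
  refine hbound.mono' (hu.mul hq).aestronglyMeasurable ?_
  filter_upwards [hp_pos, hq_pos] with x hpx hqx
  exact abs_mul_le_inv_mul_log_div_add_cosh hpx hqx hα (u x)

/-- If `D(q‖p) < ∞` and `u ∈ L^{Φ₁}(p)` (i.e. `∫ (cosh(αu)−1)·p dμ < ∞` for some `α > 0`),
then `u` is integrable with respect to `q·dμ`. -/
theorem integrable_of_orlicz_and_finite_divergence
    {X : Type*} [MeasurableSpace X] (μ : Measure X) [IsProbabilityMeasure μ]
    (p q u : X → ℝ) (hp : Measurable p) (hq : Measurable q) (hu : Measurable u)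
    (hp_pos : ∀ᵐ x ∂μ, 0 < p x) (hq_pos : ∀ᵐ x ∂μ, 0 < q x)
    (hp_int : ∫ x, p x ∂μ = 1) (hq_int : ∫ x, q x ∂μ = 1)
    (hD : Integrable (fun x => q x * Real.log (q x / p x)) μ)
    (hOrlicz : ∃ α > (0 : ℝ), Integrable (fun x => (Real.cosh (α * u x) - 1) * p x) μ) :
    Integrable (fun x => u x * q x) μ :=
  integrable_of_orlicz_and_finite_divergence_general μ p q u hq hu hp_pos hq_pos hp_int hD hOrlicz
end

section
/- Let (X, F, μ) be a probability space and p, q strictly positive densities. If ∫ (q/p)^α · p dμ < ∞ for all α in an open interval containing [0,1] (i.e., p and q are connected by an open exponential arc), then for every θ in that interval the normalized density p(θ) ∝ p^{1−θ}·q^{θ} is connected to p by an open exponential arc. -/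
/-!
Substituting `p(θ) = p^{1-θ} q^θ / Z` gives `p^{1-s} p(θ)^s = Z^{-s} p^{1-sθ} q^{sθ}`, so the arc
from `p` to `p(θ)` at time `s` is, up to a constant, the original arc at time `sθ`. Since
`0` and `θ` lie in the open interval `(a, b)`, so does `sθ` for all `s` in an open interval
around `[0, 1]`.
-/

open MeasureTheory Real Set

lemma rpow_one_sub_mul_div_rpow_eq {x y c : ℝ} (hx : 0 < x) (hy : 0 ≤ y) (hc : 0 ≤ c)
    (s θ : ℝ) :
    x ^ (1 - s) * (x ^ (1 - θ) * y ^ θ / c) ^ s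
      = (c ^ s)⁻¹ * (x ^ (1 - s * θ) * y ^ (s * θ)) := by
  have hexp : 1 - s * θ = (1 - s) + (1 - θ) * s := by ring
  rw [div_rpow (by positivity) hc, mul_rpow (by positivity) (by positivity),
    ← rpow_mul hx.le, ← rpow_mul hy, hexp, rpow_add hx, mul_comm s θ]
  ring

lemma integrable_rpow_one_sub_mul_div_rpow {X : Type*} [MeasurableSpace X] {μ : Measure X}
    {p q : X → ℝ} (hp_pos : ∀ᵐ x ∂μ, 0 < p x) (hq_nonneg : ∀ᵐ x ∂μ, 0 ≤ q x)
    {c : ℝ} (hc : 0 ≤ c) {s θ : ℝ}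
    (hint : Integrable (fun x => p x ^ (1 - s * θ) * q x ^ (s * θ)) μ) :
    Integrable (fun x => p x ^ (1 - s) * (p x ^ (1 - θ) * q x ^ θ / c) ^ s) μ := by
  refine (hint.const_mul (c ^ s)⁻¹).congr ?_
  filter_upwards [hp_pos, hq_nonneg] with x hpx hqx
  exact (rpow_one_sub_mul_div_rpow_eq hpx hqx hc s θ).symm

lemma exists_Ioo_subset_preimage_mul_const_Ioo {a b θ : ℝ} (ha : a < 0) (hb : 1 < b)
    (hθ : θ ∈ Ioo a b) :
    ∃ a' < (0 : ℝ), ∃ b' > (1 : ℝ), Ioo a' b' ⊆ (fun s => s * θ) ⁻¹' Ioo a b := by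
  rcases lt_trichotomy θ 0 with hneg | rfl | hpos
  · rw [preimage_mul_const_Ioo_of_neg a b hneg]
    exact ⟨b / θ, div_neg_of_pos_of_neg (by linarith) hneg,
      a / θ, (one_lt_div_of_neg hneg).mpr hθ.1, subset_rfl⟩
  · refine ⟨-1, by norm_num, 2, by norm_num, fun s _ => ?_⟩
    simpa using hθ
  · rw [preimage_mul_const_Ioo₀ a b hpos]
    exact ⟨a / θ, div_neg_of_neg_of_pos ha hpos, b / θ, (one_lt_div hpos).mpr hθ.2, subset_rfl⟩

theorem exponential_arc_intermediate_connected_general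
    {X : Type*} [MeasurableSpace X] (μ : Measure X)
    (p q : X → ℝ)
    (hp_pos : ∀ᵐ x ∂μ, 0 < p x) (hq_pos : ∀ᵐ x ∂μ, 0 < q x)
    (a b : ℝ) (ha : a < 0) (hb : 1 < b)
    (harc : ∀ θ ∈ Set.Ioo a b, Integrable (fun x => p x ^ (1 - θ) * q x ^ θ) μ) :
    ∀ θ ∈ Set.Ioo a b,
      ∃ a' < (0 : ℝ), ∃ b' > (1 : ℝ), ∀ s ∈ Set.Ioo a' b',
        Integrable
          (fun x => p x ^ (1 - s) *
            (p x ^ (1 - θ) * q x ^ θ / ∫ y, p y ^ (1 - θ) * q y ^ θ ∂μ) ^ s) μ := by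
  intro θ hθ
  have hq_nonneg : ∀ᵐ x ∂μ, 0 ≤ q x := hq_pos.mono fun _ hx => hx.le
  have hZ : 0 ≤ ∫ y, p y ^ (1 - θ) * q y ^ θ ∂μ := by
    refine integral_nonneg_of_ae ?_
    filter_upwards [hp_pos, hq_nonneg] with x hpx hqx
    positivity
  obtain ⟨a', ha', b', hb', hsub⟩ := exists_Ioo_subset_preimage_mul_const_Ioo ha hb hθ
  exact ⟨a', ha', b', hb', fun s hs =>
    integrable_rpow_one_sub_mul_div_rpow hp_pos hq_nonneg hZ (harc _ (hsub hs))⟩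

/-- If `p` and `q` are connected by an open exponential arc, then every intermediate
normalized density `p(θ) ∝ p^{1−θ}·q^{θ}` is connected to `p` by an open exponential arc. -/
theorem exponential_arc_intermediate_connected
    {X : Type*} [MeasurableSpace X] (μ : Measure X) [IsProbabilityMeasure μ]
    (p q : X → ℝ) (hp : Measurable p) (hq : Measurable q)
    (hp_pos : ∀ᵐ x ∂μ, 0 < p x) (hq_pos : ∀ᵐ x ∂μ, 0 < q x)
    (hp_int : ∫ x, p x ∂μ = 1) (hq_int : ∫ x, q x ∂μ = 1)
    (a b : ℝ) (ha : a < 0) (hb : 1 < b)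
    (harc : ∀ θ ∈ Set.Ioo a b, Integrable (fun x => p x ^ (1 - θ) * q x ^ θ) μ) :
    ∀ θ ∈ Set.Ioo a b,
      ∃ a' < (0 : ℝ), ∃ b' > (1 : ℝ), ∀ s ∈ Set.Ioo a' b',
        Integrable
          (fun x => p x ^ (1 - s) *
            (p x ^ (1 - θ) * q x ^ θ / ∫ y, p y ^ (1 - θ) * q y ^ θ ∂μ) ^ s) μ :=
  exponential_arc_intermediate_connected_general μ p q hp_pos hq_pos a b ha hb harc
end

section
/- Two strictly positive densities p and q on a probability space are connected by an open exponential arc if and only if there exist an open interval I ⊃ [0,1] and a measurable function u with ∫ exp(α·|u|)·p dμ < ∞ for some α > 0, such that the curve θ ↦ e^{θu}·p / ∫ e^{θu}·p dμ is well-defined (finite normalization) for all θ ∈ I and equals p at θ=0 and q at θ=1. -/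
open MeasureTheory Real Set

/-!
Write `q = e^u p / c` with `u = log (q / p)`, `c = 1` in one direction and with the normalising
constant `c = ∫ e^u p dμ > 0` in the other. Then `p^(1-θ) q^θ = c^(-θ) e^(θu) p` pointwise, so the
arc integrability of `p^(1-θ) q^θ` and the finiteness of the normalisations `∫ e^(θu) p dμ` are the
same condition on `θ`. Exponential integrability of `|u|` follows from `e^(α|u|) ≤ e^(αu) + e^(-αu)`
for any `α > 0` with `±α` inside the interval.
-/

lemma rpow_one_sub_mul_exp_mul_div_rpow {p c : ℝ} (hp : 0 < p) (hc : 0 < c) (v θ : ℝ) :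
    p ^ (1 - θ) * (exp v * p / c) ^ θ = (c ^ θ)⁻¹ * (exp (θ * v) * p) := by
  have hp_split : p ^ (1 - θ) * p ^ θ = p := by
    rw [← rpow_add hp, sub_add_cancel, rpow_one]
  rw [div_rpow (by positivity) hc.le, mul_rpow (exp_pos v).le hp.le, ← exp_mul, mul_comm v θ]
  linear_combination (exp (θ * v) / c ^ θ) * hp_split

lemma exp_log_div_mul {p q : ℝ} (hp : 0 < p) (hq : 0 < q) : exp (log (q / p)) * p = q := by
  rw [exp_log (div_pos hq hp), div_mul_cancel₀ q hp.ne']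

section ExponentialArc

variable {X : Type*} [MeasurableSpace X] {μ : Measure X} {p q u : X → ℝ} {c : ℝ}

lemma integrable_rpow_mul_rpow_iff (hp_pos : ∀ᵐ x ∂μ, 0 < p x) (hc : 0 < c)
    (hq : q =ᵐ[μ] fun x => exp (u x) * p x / c) (θ : ℝ) :
    Integrable (fun x => p x ^ (1 - θ) * q x ^ θ) μ ↔
      Integrable (fun x => exp (θ * u x) * p x) μ := by
  have h_eq : (fun x => p x ^ (1 - θ) * q x ^ θ) =ᵐ[μ]
      fun x => (c ^ θ)⁻¹ * (exp (θ * u x) * p x) := by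
    filter_upwards [hp_pos, hq] with x hpx hqx
    rw [hqx, rpow_one_sub_mul_exp_mul_div_rpow hpx hc]
  rw [integrable_congr h_eq, integrable_const_mul_iff]
  exact (inv_pos.2 (rpow_pos_of_pos hc θ)).ne'.isUnit

lemma integrable_exp_mul_abs_mul (hu : Measurable u) (hp : Measurable p)
    (hp_nonneg : ∀ᵐ x ∂μ, 0 ≤ p x) {α : ℝ}
    (h_pos : Integrable (fun x => exp (α * u x) * p x) μ)
    (h_neg : Integrable (fun x => exp (-α * u x) * p x) μ) :
    Integrable (fun x => exp (α * |u x|) * p x) μ := by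
  refine (h_pos.add h_neg).mono' ((hu.abs.const_mul α).exp.mul hp).aestronglyMeasurable ?_
  filter_upwards [hp_nonneg] with x hpx
  have h_exp : exp (α * |u x|) ≤ exp (α * u x) + exp (-α * u x) := by
    rcases abs_cases (u x) with ⟨h, _⟩ | ⟨h, _⟩
    · rw [h]
      exact le_add_of_nonneg_right (exp_pos _).le
    · rw [h, mul_neg, ← neg_mul]
      exact le_add_of_nonneg_left (exp_pos _).le
  rw [norm_of_nonneg (by positivity), Pi.add_apply, ← add_mul]
  exact mul_le_mul_of_nonneg_right h_exp hpx

lemma div_integral_ae_eq_of_ae_eq {f : X → ℝ} (hf : f =ᵐ[μ] q) (hq_int : ∫ x, q x ∂μ = 1) :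
    (fun x => f x / ∫ y, f y ∂μ) =ᵐ[μ] q := by
  rw [integral_congr_ae hf, hq_int]
  simpa only [div_one] using hf

lemma integral_pos_of_div_integral_ae_eq {f : X → ℝ} (hf_nonneg : ∀ᵐ x ∂μ, 0 ≤ f x)
    (hf : (fun x => f x / ∫ y, f y ∂μ) =ᵐ[μ] q) (hq_int : ∫ x, q x ∂μ = 1) :
    0 < ∫ x, f x ∂μ := by
  refine (integral_nonneg_of_ae hf_nonneg).lt_of_ne' fun h_zero => ?_
  have hq_zero : q =ᵐ[μ] 0 := hf.symm.trans (by simp only [h_zero, div_zero]; rfl)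
  simp [integral_congr_ae hq_zero] at hq_int

end ExponentialArc

theorem open_exponential_arc_iff_exists_u_general
    {X : Type*} [MeasurableSpace X] (μ : Measure X)
    (p q : X → ℝ) (hp : Measurable p) (hq : Measurable q)
    (hp_pos : ∀ᵐ x ∂μ, 0 < p x) (hq_pos : ∀ᵐ x ∂μ, 0 < q x)
    (hp_int : ∫ x, p x ∂μ = 1) (hq_int : ∫ x, q x ∂μ = 1) :
    (∃ a < (0 : ℝ), ∃ b > (1 : ℝ), ∀ θ ∈ Set.Ioo a b,
        Integrable (fun x => p x ^ (1 - θ) * q x ^ θ) μ) ↔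
    (∃ a < (0 : ℝ), ∃ b > (1 : ℝ), ∃ u : X → ℝ, Measurable u ∧
        (∃ α > (0 : ℝ), Integrable (fun x => Real.exp (α * |u x|) * p x) μ) ∧
        (∀ θ ∈ Set.Ioo a b, Integrable (fun x => Real.exp (θ * u x) * p x) μ) ∧
        (fun x => Real.exp (0 * u x) * p x / ∫ y, Real.exp (0 * u y) * p y ∂μ) =ᵐ[μ] p ∧
        (fun x => Real.exp (1 * u x) * p x / ∫ y, Real.exp (1 * u y) * p y ∂μ) =ᵐ[μ] q) := by
  have hp_nonneg : ∀ᵐ x ∂μ, 0 ≤ p x := hp_pos.mono fun x hx => hx.le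
  constructor
  · rintro ⟨a, ha, b, hb, h_arc⟩
    set u : X → ℝ := fun x => log (q x / p x)
    have hu : Measurable u := (hq.div hp).log
    have hq_eq : q =ᵐ[μ] fun x => exp (u x) * p x / 1 := by
      filter_upwards [hp_pos, hq_pos] with x hpx hqx
      rw [div_one, exp_log_div_mul hpx hqx]
    have h_int θ (hθ : θ ∈ Ioo a b) : Integrable (fun x => exp (θ * u x) * p x) μ :=
      (integrable_rpow_mul_rpow_iff hp_pos one_pos hq_eq θ).1 (h_arc θ hθ)
    obtain ⟨α, hα, hα_mem, hα_neg_mem⟩ : ∃ α > 0, α ∈ Ioo a b ∧ -α ∈ Ioo a b := by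
      have hm : 0 < min (-a) b := lt_min (by linarith) (by linarith)
      exact ⟨min (-a) b / 2, by linarith, ⟨by linarith, by linarith [min_le_right (-a) b]⟩,
        ⟨by linarith [min_le_left (-a) b], by linarith⟩⟩
    refine ⟨a, ha, b, hb, u, hu, ⟨α, hα, integrable_exp_mul_abs_mul hu hp hp_nonneg
      (h_int α hα_mem) (h_int (-α) hα_neg_mem)⟩, h_int,
      div_integral_ae_eq_of_ae_eq (by simp) hp_int,
      div_integral_ae_eq_of_ae_eq ?_ hq_int⟩
    simpa only [one_mul, div_one] using hq_eq.symm
  · rintro ⟨a, ha, b, hb, u, -, -, h_int, -, h_one⟩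
    set c := ∫ y, exp (1 * u y) * p y ∂μ
    have hc : 0 < c := integral_pos_of_div_integral_ae_eq
      (hp_nonneg.mono fun x hx => by positivity) h_one hq_int
    have hq_eq : q =ᵐ[μ] fun x => exp (u x) * p x / c := by
      simpa only [one_mul] using h_one.symm
    exact ⟨a, ha, b, hb, fun θ hθ =>
      (integrable_rpow_mul_rpow_iff hp_pos hc hq_eq θ).2 (h_int θ hθ)⟩

/-- `p` and `q` are connected by an open exponential arc iff there are an open interval
`I ⊃ [0,1]` and `u ∈ L^{Φ₁}(p)` such that `θ ↦ e^{θu}p/∫e^{θu}p dμ` is well defined on `I`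
and equals `p` at `θ = 0` and `q` at `θ = 1`. -/
theorem open_exponential_arc_iff_exists_u
    {X : Type*} [MeasurableSpace X] (μ : Measure X) [IsProbabilityMeasure μ]
    (p q : X → ℝ) (hp : Measurable p) (hq : Measurable q)
    (hp_pos : ∀ᵐ x ∂μ, 0 < p x) (hq_pos : ∀ᵐ x ∂μ, 0 < q x)
    (hp_int : ∫ x, p x ∂μ = 1) (hq_int : ∫ x, q x ∂μ = 1) :
    (∃ a < (0 : ℝ), ∃ b > (1 : ℝ), ∀ θ ∈ Set.Ioo a b,
        Integrable (fun x => p x ^ (1 - θ) * q x ^ θ) μ) ↔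
    (∃ a < (0 : ℝ), ∃ b > (1 : ℝ), ∃ u : X → ℝ, Measurable u ∧
        (∃ α > (0 : ℝ), Integrable (fun x => Real.exp (α * |u x|) * p x) μ) ∧
        (∀ θ ∈ Set.Ioo a b, Integrable (fun x => Real.exp (θ * u x) * p x) μ) ∧
        (fun x => Real.exp (0 * u x) * p x / ∫ y, Real.exp (0 * u y) * p y ∂μ) =ᵐ[μ] p ∧
        (fun x => Real.exp (1 * u x) * p x / ∫ y, Real.exp (1 * u y) * p y ∂μ) =ᵐ[μ] q) :=
  open_exponential_arc_iff_exists_u_general μ p q hp hq hp_pos hq_pos hp_int hq_int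
end

section
/- Connection by open exponential arcs is an equivalence relation on the set of strictly positive probability densities: it is reflexive, symmetric, and transitive. -/
/-!
By Hölder's inequality, the set of `θ` for which `p ^ (1 - θ) * q ^ θ` is integrable is an
interval, so `p ∼ q` only asks for integrability at some `θ < 0` and some `θ > 1`. Reflexivity
is `p ^ (1 - θ) * p ^ θ = p`, symmetry is `θ ↦ 1 - θ`. For transitivity, Hölder with the weight
that cancels `q` turns integrability of `p ^ (1 - α) * q ^ α` and `q ^ (1 - β) * r ^ β`,
`α, β > 1`, into that of `p ^ (1 - θ) * r ^ θ` with `θ = αβ / (α + β - 1) > 1`; the same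
argument from `r` to `p` gives a `θ < 0`.
-/

open MeasureTheory Real Set

theorem MeasureTheory.Integrable.rpow_mul_rpow_one_sub {X : Type*} [MeasurableSpace X]
    {μ : Measure X} {f g : X → ℝ} (hf : Integrable f μ) (hg : Integrable g μ)
    (hf0 : ∀ᵐ x ∂μ, 0 ≤ f x) (hg0 : ∀ᵐ x ∂μ, 0 ≤ g x) {l : ℝ} (hl0 : 0 < l) (hl1 : l < 1) :
    Integrable (fun x => f x ^ l * g x ^ (1 - l)) μ := by
  have hf' := (memLp_one_iff_integrable.2 hf).norm_rpow_div (ENNReal.ofReal l)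
  have hg' := (memLp_one_iff_integrable.2 hg).norm_rpow_div (ENNReal.ofReal (1 - l))
  rw [ENNReal.toReal_ofReal hl0.le] at hf'
  rw [ENNReal.toReal_ofReal (sub_nonneg.2 hl1.le)] at hg'
  have : ENNReal.HolderConjugate (1 / ENNReal.ofReal l) (1 / ENNReal.ofReal (1 - l)) :=
    ⟨by simp [← ENNReal.ofReal_add hl0.le (sub_nonneg.2 hl1.le)]⟩
  refine (memLp_one_iff_integrable.1 (hg'.mul' hf')).congr ?_
  filter_upwards [hf0, hg0] with x hfx hgx
  rw [norm_of_nonneg hfx, norm_of_nonneg hgx]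

section ExpArc

variable {X : Type*} [MeasurableSpace X] {μ : Measure X} {p q r : X → ℝ}

def ExpArcConnected (μ : Measure X) (p q : X → ℝ) : Prop :=
  ∃ a < (0 : ℝ), ∃ b > (1 : ℝ), ∀ θ ∈ Ioo a b, Integrable (fun x => p x ^ (1 - θ) * q x ^ θ) μ

theorem integrable_arc_swap_iff {θ : ℝ} :
    Integrable (fun x => p x ^ (1 - (1 - θ)) * q x ^ (1 - θ)) μ ↔
      Integrable (fun x => q x ^ (1 - θ) * p x ^ θ) μ := by
  simp only [sub_sub_cancel, mul_comm]

theorem integrable_arc_of_mem_Ioo (hp : ∀ᵐ x ∂μ, 0 < p x) (hq : ∀ᵐ x ∂μ, 0 < q x)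
    {θ₁ θ₂ θ : ℝ} (h₁ : Integrable (fun x => p x ^ (1 - θ₁) * q x ^ θ₁) μ)
    (h₂ : Integrable (fun x => p x ^ (1 - θ₂) * q x ^ θ₂) μ) (hθ : θ ∈ Ioo θ₁ θ₂) :
    Integrable (fun x => p x ^ (1 - θ) * q x ^ θ) μ := by
  obtain ⟨hθ₁, hθ₂⟩ := hθ
  set l := (θ₂ - θ) / (θ₂ - θ₁) with hl_def
  have hl : θ₁ * l + θ₂ * (1 - l) = θ := by
    rw [hl_def]; field_simp [(by linarith : θ₂ - θ₁ ≠ 0)]; ring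
  have hl0 : 0 < l := div_pos (by linarith) (by linarith)
  have hl1 : l < 1 := (div_lt_one (by linarith)).2 (by linarith)
  refine (h₁.rpow_mul_rpow_one_sub h₂ ?_ ?_ hl0 hl1).congr ?_
  · filter_upwards [hp, hq] with x hpx hqx; positivity
  · filter_upwards [hp, hq] with x hpx hqx; positivity
  · filter_upwards [hp, hq] with x hpx hqx
    simp only [rpow_def_of_pos, hpx, hqx, ← exp_add, exp_pos, log_exp]
    rw [← hl]; ring_nf

/-- The Hölder weight `l = (β - 1) / (α + β - 1)` is the one that cancels the exponent of `q`. -/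
theorem integrable_arc_trans (hp : ∀ᵐ x ∂μ, 0 < p x) (hq : ∀ᵐ x ∂μ, 0 < q x)
    (hr : ∀ᵐ x ∂μ, 0 < r x) {α β : ℝ} (hα : 1 < α) (hβ : 1 < β)
    (hpq : Integrable (fun x => p x ^ (1 - α) * q x ^ α) μ)
    (hqr : Integrable (fun x => q x ^ (1 - β) * r x ^ β) μ) :
    Integrable (fun x => p x ^ (1 - α * β / (α + β - 1)) * r x ^ (α * β / (α + β - 1))) μ := by
  have hs : 0 < α + β - 1 := by linarith
  set l := (β - 1) / (α + β - 1) with hl_def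
  have hl0 : 0 < l := div_pos (by linarith) hs
  have hl1 : l < 1 := (div_lt_one hs).2 (by linarith)
  refine (hpq.rpow_mul_rpow_one_sub hqr ?_ ?_ hl0 hl1).congr ?_
  · filter_upwards [hp, hq] with x hpx hqx; positivity
  · filter_upwards [hq, hr] with x hqx hrx; positivity
  · filter_upwards [hp, hq, hr] with x hpx hqx hrx
    simp only [rpow_def_of_pos, hpx, hqx, hrx, ← exp_add, exp_pos, log_exp]
    congr 1
    rw [hl_def]
    field_simp
    ring

namespace ExpArcConnected

theorem refl (hp : Integrable p μ) (hp0 : ∀ᵐ x ∂μ, 0 < p x) : ExpArcConnected μ p p := by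
  refine ⟨-1, by norm_num, 2, by norm_num, fun θ _ => hp.congr ?_⟩
  filter_upwards [hp0] with x hx
  rw [← rpow_add hx, sub_add_cancel, rpow_one]

theorem symm (h : ExpArcConnected μ p q) : ExpArcConnected μ q p := by
  obtain ⟨a, ha, b, hb, h⟩ := h
  refine ⟨1 - b, by linarith, 1 - a, by linarith, fun θ hθ => ?_⟩
  exact integrable_arc_swap_iff.1 (h (1 - θ) ⟨by linarith [hθ.2], by linarith [hθ.1]⟩)

theorem exists_one_lt_integrable_trans (hp : ∀ᵐ x ∂μ, 0 < p x) (hq : ∀ᵐ x ∂μ, 0 < q x)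
    (hr : ∀ᵐ x ∂μ, 0 < r x) (hpq : ExpArcConnected μ p q) (hqr : ExpArcConnected μ q r) :
    ∃ θ : ℝ, 1 < θ ∧ Integrable (fun x => p x ^ (1 - θ) * r x ^ θ) μ := by
  obtain ⟨a, ha, b, hb, hpq⟩ := hpq
  obtain ⟨c, hc, d, hd, hqr⟩ := hqr
  have hα : 1 < (1 + b) / 2 := by linarith
  have hβ : 1 < (1 + d) / 2 := by linarith
  have hθ : 1 < (1 + b) / 2 * ((1 + d) / 2) / ((1 + b) / 2 + (1 + d) / 2 - 1) :=
    (one_lt_div (by linarith)).2 (by nlinarith)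
  exact ⟨_, hθ, integrable_arc_trans hp hq hr hα hβ
    (hpq _ ⟨by linarith, by linarith⟩) (hqr _ ⟨by linarith, by linarith⟩)⟩

theorem trans (hp : ∀ᵐ x ∂μ, 0 < p x) (hq : ∀ᵐ x ∂μ, 0 < q x) (hr : ∀ᵐ x ∂μ, 0 < r x)
    (hpq : ExpArcConnected μ p q) (hqr : ExpArcConnected μ q r) : ExpArcConnected μ p r := by
  obtain ⟨θ₂, hθ₂, h₂⟩ := exists_one_lt_integrable_trans hp hq hr hpq hqr
  obtain ⟨η, hη, h₁⟩ := exists_one_lt_integrable_trans hr hq hp hqr.symm hpq.symm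
  exact ⟨1 - η, by linarith, θ₂, hθ₂, fun θ hθ =>
    integrable_arc_of_mem_Ioo hp hr (integrable_arc_swap_iff.2 h₁) h₂ hθ⟩

end ExpArcConnected

end ExpArc

theorem open_exponential_arc_equivalence_general
    {X : Type*} [MeasurableSpace X] (μ : Measure X) :
    Equivalence
      (fun p q : {f : X → ℝ // Measurable f ∧ (∀ᵐ x ∂μ, 0 < f x) ∧ ∫ x, f x ∂μ = 1} =>
        ∃ a < (0 : ℝ), ∃ b > (1 : ℝ), ∀ θ ∈ Set.Ioo a b,
          Integrable (fun x => p.1 x ^ (1 - θ) * q.1 x ^ θ) μ) := by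
  have hint (p : {f : X → ℝ // Measurable f ∧ (∀ᵐ x ∂μ, 0 < f x) ∧ ∫ x, f x ∂μ = 1}) :
      Integrable p.1 μ :=
    Integrable.of_integral_ne_zero (by rw [p.2.2.2]; exact one_ne_zero)
  exact ⟨fun p => ExpArcConnected.refl (hint p) p.2.2.1, ExpArcConnected.symm,
    fun {p q r} hpq hqr => ExpArcConnected.trans p.2.2.1 q.2.2.1 r.2.2.1 hpq hqr⟩

/-- Connection by open exponential arcs is an equivalence relation on the set of strictly
positive probability densities. -/
theorem open_exponential_arc_equivalence
    {X : Type*} [MeasurableSpace X] (μ : Measure X) [IsProbabilityMeasure μ] :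
    Equivalence
      (fun p q : {f : X → ℝ // Measurable f ∧ (∀ᵐ x ∂μ, 0 < f x) ∧ ∫ x, f x ∂μ = 1} =>
        ∃ a < (0 : ℝ), ∃ b > (1 : ℝ), ∀ θ ∈ Set.Ioo a b,
          Integrable (fun x => p.1 x ^ (1 - θ) * q.1 x ^ θ) μ) :=
  open_exponential_arc_equivalence_general μ
end

section
/- Connection by open mixture arcs is an equivalence relation on the set of strictly positive probability densities: it is reflexive, symmetric, and transitive. -/
/-!
The mixture `(1 - θ) p + θ q` is affine in `θ`, so the set of parameters for which it is
a.e. positive is an interval, and an open arc exists iff this interval contains some `θ < 0`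
and some `θ > 1`. For `θ = b > 1`, positivity reads `p < b / (b - 1) • q`, and for `θ < 0` the
same with `p` and `q` exchanged. Hence `p ∼ q` iff `p / q` and `q / p` are a.e. bounded by a
constant, a relation that is evidently reflexive, symmetric and transitive.
-/

open MeasureTheory Set

theorem Set.OrdConnected.exists_Ioo_subset_iff {α : Type*} [LinearOrder α] [DenselyOrdered α]
    {s : Set α} (hs : s.OrdConnected) {u v : α} (huv : u ≤ v) :
    (∃ a < u, ∃ b > v, Ioo a b ⊆ s) ↔ (∃ a < u, a ∈ s) ∧ (∃ b > v, b ∈ s) := by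
  constructor
  · rintro ⟨a, ha, b, hb, hab⟩
    obtain ⟨a', ha'a, ha'u⟩ := exists_between ha
    obtain ⟨b', hvb', hb'b⟩ := exists_between hb
    exact ⟨⟨a', ha'u, hab ⟨ha'a, by order⟩⟩, ⟨b', hvb', hab ⟨by order, hb'b⟩⟩⟩
  · rintro ⟨⟨a, ha, has⟩, ⟨b, hb, hbs⟩⟩
    exact ⟨a, ha, b, hb, Ioo_subset_Icc_self.trans (hs.out has hbs)⟩

namespace MixtureArc

variable {X : Type*} [MeasurableSpace X] (μ : Measure X)

def posSet (p q : X → ℝ) : Set ℝ :=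
  {θ | ∀ᵐ x ∂μ, 0 < (1 - θ) * p x + θ * q x}

def OpenArc (p q : X → ℝ) : Prop :=
  ∃ a < (0 : ℝ), ∃ b > (1 : ℝ), Ioo a b ⊆ posSet μ p q

def BoundedRatio (p q : X → ℝ) : Prop :=
  ∃ c > (1 : ℝ), ∀ᵐ x ∂μ, p x < c * q x

variable {μ} {p q r : X → ℝ}

theorem mem_posSet {θ : ℝ} : θ ∈ posSet μ p q ↔ ∀ᵐ x ∂μ, 0 < (1 - θ) * p x + θ * q x :=
  Iff.rfl

theorem convex_posSet : Convex ℝ (posSet μ p q) := by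
  intro θ₁ h₁ θ₂ h₂ s t hs ht hst
  rw [mem_posSet] at *
  filter_upwards [h₁, h₂] with x hx₁ hx₂
  have hmix : (1 - (s • θ₁ + t • θ₂)) * p x + (s • θ₁ + t • θ₂) * q x =
      s • ((1 - θ₁) * p x + θ₁ * q x) + t • ((1 - θ₂) * p x + θ₂ * q x) := by
    simp only [smul_eq_mul]
    linear_combination (-p x) * hst
  rw [hmix]
  exact convex_Ioi (0 : ℝ) hx₁ hx₂ hs ht hst

theorem mem_posSet_comm {θ : ℝ} : θ ∈ posSet μ p q ↔ 1 - θ ∈ posSet μ q p := by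
  simp only [mem_posSet, sub_sub_cancel]
  refine Filter.eventually_congr (Filter.Eventually.of_forall fun x => ?_)
  rw [add_comm]

theorem mixture_pos_iff_lt {b s t : ℝ} (hb : 1 < b) :
    0 < (1 - b) * s + b * t ↔ s < b / (b - 1) * t := by
  have hb' : 0 < b - 1 := by linarith
  rw [div_mul_eq_mul_div, lt_div_iff₀ hb']
  constructor <;> intro h <;> linarith

theorem exists_gt_one_mem_posSet_iff :
    (∃ b > 1, b ∈ posSet μ p q) ↔ BoundedRatio μ p q := by
  constructor
  · rintro ⟨b, hb, hbS⟩
    refine ⟨b / (b - 1), ?_, ?_⟩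
    · rw [gt_iff_lt, one_lt_div (sub_pos.2 hb)]
      linarith
    · filter_upwards [hbS] with x hx
      exact (mixture_pos_iff_lt hb).1 hx
  · rintro ⟨c, hc, hpq⟩
    have hc' : 0 < c - 1 := by linarith
    have hb : 1 < c / (c - 1) := by
      rw [one_lt_div hc']
      linarith
    have hbc : c / (c - 1) / (c / (c - 1) - 1) = c := by
      field_simp
      ring
    refine ⟨c / (c - 1), hb, ?_⟩
    filter_upwards [hpq] with x hx
    rw [mixture_pos_iff_lt hb, hbc]
    exact hx

theorem openArc_iff : OpenArc μ p q ↔ BoundedRatio μ p q ∧ BoundedRatio μ q p := by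
  have hneg : (∃ a < 0, a ∈ posSet μ p q) ↔ ∃ b > 1, b ∈ posSet μ q p := by
    constructor
    · rintro ⟨a, ha, haS⟩
      exact ⟨1 - a, by linarith, mem_posSet_comm.1 haS⟩
    · rintro ⟨b, hb, hbS⟩
      exact ⟨1 - b, by linarith, mem_posSet_comm.2 (by rwa [sub_sub_cancel])⟩
  rw [OpenArc, convex_posSet.ordConnected.exists_Ioo_subset_iff zero_le_one, hneg,
    exists_gt_one_mem_posSet_iff, exists_gt_one_mem_posSet_iff, and_comm]

theorem BoundedRatio.refl (hp : ∀ᵐ x ∂μ, 0 < p x) : BoundedRatio μ p p :=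
  ⟨2, one_lt_two, by filter_upwards [hp] with x hx; linarith⟩

theorem BoundedRatio.trans (hpq : BoundedRatio μ p q) (hqr : BoundedRatio μ q r) :
    BoundedRatio μ p r := by
  obtain ⟨c, hc, hpq⟩ := hpq
  obtain ⟨d, hd, hqr⟩ := hqr
  refine ⟨c * d, one_lt_mul_of_lt_of_le hc hd.le, ?_⟩
  filter_upwards [hpq, hqr] with x hpx hqx
  calc p x < c * q x := hpx
    _ < c * (d * r x) := by gcongr
    _ = c * d * r x := by ring

end MixtureArc

open MixtureArc in
theorem open_mixture_arc_equivalence_general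
    {X : Type*} [MeasurableSpace X] (μ : Measure X) :
    Equivalence
      (fun p q : {f : X → ℝ // Measurable f ∧ (∀ᵐ x ∂μ, 0 < f x) ∧ ∫ x, f x ∂μ = 1} =>
        ∃ a < (0 : ℝ), ∃ b > (1 : ℝ), ∀ θ ∈ Set.Ioo a b,
          ∀ᵐ x ∂μ, 0 < (1 - θ) * p.1 x + θ * q.1 x) :=
  ⟨fun p => openArc_iff.2 ⟨.refl p.2.2.1, .refl p.2.2.1⟩,
    fun h => openArc_iff.2 (openArc_iff.1 h).symm,
    fun h₁ h₂ => openArc_iff.2 ⟨(openArc_iff.1 h₁).1.trans (openArc_iff.1 h₂).1,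
      (openArc_iff.1 h₂).2.trans (openArc_iff.1 h₁).2⟩⟩

/-- Connection by open mixture arcs is an equivalence relation on the set of strictly
positive probability densities. -/
theorem open_mixture_arc_equivalence
    {X : Type*} [MeasurableSpace X] (μ : Measure X) [IsProbabilityMeasure μ] :
    Equivalence
      (fun p q : {f : X → ℝ // Measurable f ∧ (∀ᵐ x ∂μ, 0 < f x) ∧ ∫ x, f x ∂μ = 1} =>
        ∃ a < (0 : ℝ), ∃ b > (1 : ℝ), ∀ θ ∈ Set.Ioo a b,
          ∀ᵐ x ∂μ, 0 < (1 - θ) * p.1 x + θ * q.1 x) :=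
  open_mixture_arc_equivalence_general μ
end

section
/- Two strictly positive densities p and q on a probability space are connected by an open mixture arc if and only if the ratio q/p is μ-a.e. bounded above and below by positive constants, i.e., there exist constants 0 < c₁ < 1 < c₂ with c₁ < q/p < c₂ μ-a.e. -/
/-!
Dividing by `p x > 0`, the mixture `(1 - θ) p + θ q` is positive at `x` exactly when the ratio
`r = q x / p x` satisfies `r < 1 - θ⁻¹` (for `θ < 0`) or `1 - θ⁻¹ < r` (for `θ > 0`). Since
`θ ↦ 1 - θ⁻¹` is increasing on each half-line, positivity at parameters `a < 0` and `b > 1` gives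
the ratio bounds `c₂ = 1 - a⁻¹ > 1` and `c₁ = 1 - b⁻¹ ∈ (0, 1)`, and ratio bounds `c₁ < 1 < c₂` give
positivity on the whole arc `((1 - c₂)⁻¹, (1 - c₁)⁻¹)`.
-/

open MeasureTheory

lemma mixture_eq_mul_div_sub {p q θ : ℝ} (hp : p ≠ 0) (hθ : θ ≠ 0) :
    (1 - θ) * p + θ * q = θ * p * (q / p - (1 - θ⁻¹)) := by
  field_simp
  ring

lemma mixture_pos_iff_div_lt_of_neg {p q θ : ℝ} (hp : 0 < p) (hθ : θ < 0) :
    0 < (1 - θ) * p + θ * q ↔ q / p < 1 - θ⁻¹ := by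
  rw [mixture_eq_mul_div_sub hp.ne' hθ.ne, ← smul_eq_mul,
    smul_pos_iff_of_neg_left (mul_neg_of_neg_of_pos hθ hp), sub_neg]

lemma mixture_pos_iff_lt_div_of_pos {p q θ : ℝ} (hp : 0 < p) (hθ : 0 < θ) :
    0 < (1 - θ) * p + θ * q ↔ 1 - θ⁻¹ < q / p := by
  rw [mixture_eq_mul_div_sub hp.ne' hθ.ne', mul_pos_iff_of_pos_left (mul_pos hθ hp), sub_pos]

theorem open_mixture_arc_iff_bounded_ratio_general
    {X : Type*} [MeasurableSpace X] (μ : Measure X)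
    (p q : X → ℝ)
    (hp_pos : ∀ᵐ x ∂μ, 0 < p x) :
    (∃ a < (0 : ℝ), ∃ b > (1 : ℝ), ∀ θ ∈ Set.Ioo a b,
        ∀ᵐ x ∂μ, 0 < (1 - θ) * p x + θ * q x) ↔
    (∃ c₁ c₂ : ℝ, 0 < c₁ ∧ c₁ < 1 ∧ 1 < c₂ ∧
        ∀ᵐ x ∂μ, c₁ < q x / p x ∧ q x / p x < c₂) := by
  constructor
  · rintro ⟨a, ha, b, hb, harc⟩
    have hb_pos : 0 < (1 + b) / 2 := by linarith
    refine ⟨1 - ((1 + b) / 2)⁻¹, 1 - (a / 2)⁻¹, ?_, ?_, ?_, ?_⟩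
    · linarith [inv_lt_one_of_one_lt₀ (show 1 < (1 + b) / 2 by linarith)]
    · linarith [inv_pos.2 hb_pos]
    · linarith [inv_lt_zero.2 (show a / 2 < 0 by linarith)]
    · filter_upwards [hp_pos, harc (a / 2) ⟨by linarith, by linarith⟩,
        harc ((1 + b) / 2) ⟨by linarith, by linarith⟩] with x hpx hneg hpos
      exact ⟨(mixture_pos_iff_lt_div_of_pos hpx hb_pos).1 hpos,
        (mixture_pos_iff_div_lt_of_neg hpx (by linarith)).1 hneg⟩
  · rintro ⟨c₁, c₂, hc₁, hc₁_lt, hc₂, hbound⟩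
    have ha : (1 - c₂)⁻¹ < 0 := inv_lt_zero.2 (by linarith)
    have hb : 1 < (1 - c₁)⁻¹ := (one_lt_inv₀ (by linarith)).2 (by linarith)
    refine ⟨(1 - c₂)⁻¹, ha, (1 - c₁)⁻¹, hb, fun θ ⟨haθ, hθb⟩ => ?_⟩
    filter_upwards [hp_pos, hbound] with x hpx ⟨hlow, hhigh⟩
    rcases lt_trichotomy θ 0 with hθ | rfl | hθ
    · rw [mixture_pos_iff_div_lt_of_neg hpx hθ]
      calc q x / p x < c₂ := hhigh
        _ = 1 - ((1 - c₂)⁻¹)⁻¹ := by rw [inv_inv]; ring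
        _ < 1 - θ⁻¹ := by linarith [(inv_lt_inv_of_neg hθ ha).2 haθ]
    · simpa using hpx
    · rw [mixture_pos_iff_lt_div_of_pos hpx hθ]
      calc 1 - θ⁻¹ < 1 - ((1 - c₁)⁻¹)⁻¹ := by
            linarith [(inv_lt_inv₀ (zero_lt_one.trans hb) hθ).2 hθb]
        _ = c₁ := by rw [inv_inv]; ring
        _ < q x / p x := hlow

/-- `p` and `q` are connected by an open mixture arc iff the ratio `q/p` is a.e. bounded
above and below by positive constants `c₁ < 1 < c₂`. -/
theorem open_mixture_arc_iff_bounded_ratio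
    {X : Type*} [MeasurableSpace X] (μ : Measure X) [IsProbabilityMeasure μ]
    (p q : X → ℝ) (hp : Measurable p) (hq : Measurable q)
    (hp_pos : ∀ᵐ x ∂μ, 0 < p x) (hq_pos : ∀ᵐ x ∂μ, 0 < q x)
    (hp_int : ∫ x, p x ∂μ = 1) (hq_int : ∫ x, q x ∂μ = 1) :
    (∃ a < (0 : ℝ), ∃ b > (1 : ℝ), ∀ θ ∈ Set.Ioo a b,
        ∀ᵐ x ∂μ, 0 < (1 - θ) * p x + θ * q x) ↔
    (∃ c₁ c₂ : ℝ, 0 < c₁ ∧ c₁ < 1 ∧ 1 < c₂ ∧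
        ∀ᵐ x ∂μ, c₁ < q x / p x ∧ q x / p x < c₂) :=
  open_mixture_arc_iff_bounded_ratio_general μ p q hp_pos
end

section
/- If two strictly positive densities p and q are connected by an open mixture arc (equivalently, q/p and p/q are essentially bounded), then p and q are connected by an open exponential arc, i.e., ∫ p^{1−θ}·q^{θ} dμ < ∞ for all θ in some open interval containing [0,1]. -/
/-!
Evaluating the mixture arc at some `t < 0` and at `1 - t > 1` bounds the likelihood ratio
`q / p` between `C⁻¹` and `C`, where `C = (1 - t) / (-t)`. Then
`p ^ (1 - θ) * q ^ θ = p * (q / p) ^ θ ≤ C ^ |θ| * p` for every real `θ`, and the right-hand side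
is integrable because `p` is.
-/

open MeasureTheory Real Set

lemma exists_neg_mem_Ioo_and_one_sub_mem_Ioo {a b : ℝ} (ha : a < 0) (hb : 1 < b) :
    ∃ t < 0, t ∈ Ioo a b ∧ 1 - t ∈ Ioo a b := by
  refine ⟨max (a / 2) ((1 - b) / 2), ?_, ⟨?_, ?_⟩, ⟨?_, ?_⟩⟩ <;>
    cases max_cases (a / 2) ((1 - b) / 2) <;> linarith

lemma le_mul_of_mixture_pos {t u v : ℝ} (ht : t < 0) (h : 0 < (1 - t) * u + t * v) :
    v ≤ (1 - t) / -t * u := by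
  rw [div_mul_eq_mul_div, le_div_iff₀ (neg_pos.2 ht)]
  linarith

lemma rpow_le_rpow_abs_of_inv_le_of_le {r C : ℝ} (hr : 0 < r) (hrC : r ≤ C) (hCr : C⁻¹ ≤ r)
    (θ : ℝ) : r ^ θ ≤ C ^ |θ| := by
  rcases le_total 0 θ with hθ | hθ
  · rw [abs_of_nonneg hθ]
    exact rpow_le_rpow hr.le hrC hθ
  · rw [abs_of_nonpos hθ, ← neg_neg θ, rpow_neg_eq_inv_rpow, neg_neg]
    exact rpow_le_rpow (inv_nonneg.2 hr.le) (inv_le_of_inv_le₀ (hr.trans_le hrC) hCr)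
      (neg_nonneg.2 hθ)

lemma rpow_one_sub_mul_rpow_le {u v C : ℝ} (hu : 0 < u) (hv : 0 < v) (hvu : v ≤ C * u)
    (huv : u ≤ C * v) (θ : ℝ) : u ^ (1 - θ) * v ^ θ ≤ C ^ |θ| * u := by
  have hC : 0 < C := pos_of_mul_pos_left (hv.trans_le hvu) hu.le
  have hratio : (v / u) ^ θ ≤ C ^ |θ| := by
    refine rpow_le_rpow_abs_of_inv_le_of_le (div_pos hv hu) ((div_le_iff₀ hu).2 hvu) ?_ θ
    rw [le_div_iff₀ hu, inv_mul_le_iff₀ hC]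
    exact huv
  calc u ^ (1 - θ) * v ^ θ = (v / u) ^ θ * u := by
        rw [div_rpow hv.le hu.le, rpow_sub hu, rpow_one]
        field_simp
    _ ≤ C ^ |θ| * u := by gcongr

lemma integrable_rpow_one_sub_mul_rpow {X : Type*} [MeasurableSpace X] {μ : Measure X}
    {p q : X → ℝ} {C : ℝ} (hp : Measurable p) (hq : Measurable q) (hp_int : Integrable p μ)
    (hp_pos : ∀ᵐ x ∂μ, 0 < p x) (hq_pos : ∀ᵐ x ∂μ, 0 < q x)
    (hqp : ∀ᵐ x ∂μ, q x ≤ C * p x) (hpq : ∀ᵐ x ∂μ, p x ≤ C * q x) (θ : ℝ) :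
    Integrable (fun x => p x ^ (1 - θ) * q x ^ θ) μ := by
  refine (hp_int.const_mul (C ^ |θ|)).mono' (by fun_prop) ?_
  filter_upwards [hp_pos, hq_pos, hqp, hpq] with x hpx hqx hqpx hpqx
  rw [norm_of_nonneg (by positivity)]
  exact rpow_one_sub_mul_rpow_le hpx hqx hqpx hpqx θ

theorem open_exponential_arc_of_open_mixture_arc_general
    {X : Type*} [MeasurableSpace X] (μ : Measure X)
    (p q : X → ℝ) (hp : Measurable p) (hq : Measurable q)
    (hp_pos : ∀ᵐ x ∂μ, 0 < p x) (hq_pos : ∀ᵐ x ∂μ, 0 < q x)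
    (hp_int : ∫ x, p x ∂μ = 1)
    (hmix : ∃ a < (0 : ℝ), ∃ b > (1 : ℝ), ∀ θ ∈ Set.Ioo a b,
      ∀ᵐ x ∂μ, 0 < (1 - θ) * p x + θ * q x) :
    ∃ a < (0 : ℝ), ∃ b > (1 : ℝ), ∀ θ ∈ Set.Ioo a b,
      Integrable (fun x => p x ^ (1 - θ) * q x ^ θ) μ := by
  obtain ⟨a, ha, b, hb, hmix⟩ := hmix
  obtain ⟨t, ht, hta, htb⟩ := exists_neg_mem_Ioo_and_one_sub_mem_Ioo ha hb
  have hp_integrable : Integrable p μ := .of_integral_ne_zero (by simp [hp_int])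
  have hqp : ∀ᵐ x ∂μ, q x ≤ (1 - t) / -t * p x :=
    (hmix t hta).mono fun x hx => le_mul_of_mixture_pos ht hx
  have hpq : ∀ᵐ x ∂μ, p x ≤ (1 - t) / -t * q x :=
    (hmix (1 - t) htb).mono fun x hx => le_mul_of_mixture_pos ht (by linarith)
  exact ⟨-1, by norm_num, 2, by norm_num, fun θ _ =>
    integrable_rpow_one_sub_mul_rpow hp hq hp_integrable hp_pos hq_pos hqp hpq θ⟩

/-- If `p` and `q` are connected by an open mixture arc, then they are connected by an
open exponential arc. -/
theorem open_exponential_arc_of_open_mixture_arc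
    {X : Type*} [MeasurableSpace X] (μ : Measure X) [IsProbabilityMeasure μ]
    (p q : X → ℝ) (hp : Measurable p) (hq : Measurable q)
    (hp_pos : ∀ᵐ x ∂μ, 0 < p x) (hq_pos : ∀ᵐ x ∂μ, 0 < q x)
    (hp_int : ∫ x, p x ∂μ = 1) (hq_int : ∫ x, q x ∂μ = 1)
    (hmix : ∃ a < (0 : ℝ), ∃ b > (1 : ℝ), ∀ θ ∈ Set.Ioo a b,
      ∀ᵐ x ∂μ, 0 < (1 - θ) * p x + θ * q x) :
    ∃ a < (0 : ℝ), ∃ b > (1 : ℝ), ∀ θ ∈ Set.Ioo a b,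
      Integrable (fun x => p x ^ (1 - θ) * q x ^ θ) μ :=
  open_exponential_arc_of_open_mixture_arc_general μ p q hp hq hp_pos hq_pos hp_int hmix
end

section
/- For the beta-type densities p(x) = β₁·x^{β₁−1} and q(x) = β₂·x^{β₂−1} on [0,1] with Lebesgue measure, where 0 < β₁ < β₂, p and q are connected by an open exponential arc but are not connected by an open mixture arc. -/
open MeasureTheory Real Set Filter Topology

/-!
On `(0, 1]` the geometric mixture `p^{1-θ} q^θ` is a constant multiple of `x^{β₁ - 1 + θ(β₂ - β₁)}`,
which is integrable exactly when `β₁ + θ(β₂ - β₁) > 0`; this holds on a neighbourhood of `[0, 1]`.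
On the other hand `(1 - θ) p + θ q = x^{β₁ - 1} ((1 - θ) β₁ + θ β₂ x^{β₂ - β₁})`, and for `θ > 1`
the bracket tends to `(1 - θ) β₁ < 0` as `x → 0⁺`, so the linear mixture is negative on a
whole interval `(0, ε)`, which has positive Lebesgue measure.
-/

lemma rpow_weighted_geom_mean_of_pos {c₁ c₂ s t θ x : ℝ} (hc₁ : 0 ≤ c₁) (hc₂ : 0 ≤ c₂)
    (hx : 0 < x) :
    (c₁ * x ^ s) ^ (1 - θ) * (c₂ * x ^ t) ^ θ =
      c₁ ^ (1 - θ) * c₂ ^ θ * x ^ ((1 - θ) * s + θ * t) := by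
  rw [mul_rpow hc₁ (rpow_nonneg hx.le _), mul_rpow hc₂ (rpow_nonneg hx.le _),
    ← rpow_mul hx.le, ← rpow_mul hx.le, rpow_add hx]
  ring_nf

lemma integrableOn_Icc_rpow_weighted_geom_mean {c₁ c₂ s t θ : ℝ} (hc₁ : 0 ≤ c₁) (hc₂ : 0 ≤ c₂)
    (h : -1 < (1 - θ) * s + θ * t) :
    IntegrableOn (fun x => (c₁ * x ^ s) ^ (1 - θ) * (c₂ * x ^ t) ^ θ) (Icc 0 1) := by
  rw [integrableOn_Icc_iff_integrableOn_Ioo]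
  have hpow : IntegrableOn (fun x : ℝ => c₁ ^ (1 - θ) * c₂ ^ θ * x ^ ((1 - θ) * s + θ * t))
      (Ioo 0 1) :=
    ((intervalIntegral.integrableOn_Ioo_rpow_iff one_pos).2 h).const_mul _
  exact hpow.congr_fun (fun x hx => (rpow_weighted_geom_mean_of_pos hc₁ hc₂ hx.1).symm)
    measurableSet_Ioo

lemma mul_rpow_add_mul_rpow_of_pos {a b s t x : ℝ} (hx : 0 < x) :
    a * x ^ s + b * x ^ t = x ^ s * (a + b * x ^ (t - s)) := by
  rw [mul_add, ← mul_assoc, mul_comm (x ^ s) b, mul_assoc, ← rpow_add hx, add_sub_cancel]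
  ring

lemma eventually_linear_mixture_rpow_neg {c₁ c₂ s t θ : ℝ} (hc₁ : 0 < c₁) (hst : s < t)
    (hθ : 1 < θ) :
    ∀ᶠ x in 𝓝[>] 0, (1 - θ) * (c₁ * x ^ s) + θ * (c₂ * x ^ t) < 0 := by
  have hcont : ContinuousAt (fun x : ℝ => (1 - θ) * c₁ + θ * c₂ * x ^ (t - s)) 0 :=
    continuousAt_const.add
      (continuousAt_const.mul (continuousAt_rpow_const 0 _ (Or.inr (sub_pos.2 hst).le)))
  have hneg : (1 - θ) * c₁ + θ * c₂ * (0 : ℝ) ^ (t - s) < 0 := by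
    rw [zero_rpow (sub_pos.2 hst).ne', mul_zero, add_zero]
    nlinarith
  filter_upwards [nhdsWithin_le_nhds (hcont.eventually (gt_mem_nhds hneg)), self_mem_nhdsWithin]
    with x hx hx0
  calc (1 - θ) * (c₁ * x ^ s) + θ * (c₂ * x ^ t)
      = x ^ s * ((1 - θ) * c₁ + θ * c₂ * x ^ (t - s)) := by
        rw [← mul_rpow_add_mul_rpow_of_pos hx0]; ring
    _ < 0 := mul_neg_of_pos_of_neg (rpow_pos_of_pos hx0 _) hx

lemma not_ae_restrict_Icc_of_eventually_nhdsGT {P : ℝ → Prop} {a b : ℝ} (hab : a < b)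
    (h : ∀ᶠ x in 𝓝[>] a, ¬ P x) : ¬ ∀ᵐ x ∂volume.restrict (Icc a b), P x := by
  intro hP
  obtain ⟨u, hau, hu⟩ := mem_nhdsGT_iff_exists_Ioo_subset.1 h
  have hac : a < min u b := lt_min hau hab
  have hsub : Ioo a (min u b) ⊆ Icc a b :=
    Ioo_subset_Icc_self.trans (Icc_subset_Icc_right (min_le_right _ _))
  have hfalse : ∀ᵐ x ∂volume.restrict (Ioo a (min u b)), False := by
    filter_upwards [ae_mono (Measure.restrict_mono hsub le_rfl) hP, ae_restrict_mem measurableSet_Ioo]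
      with x hPx hx
    exact hu (Ioo_subset_Ioo_right (min_le_left _ _) hx) hPx
  rw [eventually_false_iff_eq_bot, ae_eq_bot, Measure.restrict_eq_zero, Real.volume_Ioo] at hfalse
  exact (ENNReal.ofReal_pos.2 (sub_pos.2 hac)).ne' hfalse

/-- The beta-type densities `p(x) = β₁ x^{β₁−1}` and `q(x) = β₂ x^{β₂−1}` on `[0,1]`
with `0 < β₁ < β₂` are connected by an open exponential arc but not by an open
mixture arc. -/
theorem beta_densities_exponential_not_mixture
    (β₁ β₂ : ℝ) (h₁ : 0 < β₁) (h₁₂ : β₁ < β₂)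
    (p q : ℝ → ℝ)
    (hp : ∀ x, p x = β₁ * x ^ (β₁ - 1))
    (hq : ∀ x, q x = β₂ * x ^ (β₂ - 1)) :
    (∃ a < (0 : ℝ), ∃ b > (1 : ℝ), ∀ θ ∈ Set.Ioo a b,
        IntegrableOn (fun x => p x ^ (1 - θ) * q x ^ θ) (Set.Icc 0 1) volume) ∧
    ¬ (∃ a < (0 : ℝ), ∃ b > (1 : ℝ), ∀ θ ∈ Set.Ioo a b,
        ∀ᵐ x ∂(volume.restrict (Set.Icc (0:ℝ) 1)), 0 < (1 - θ) * p x + θ * q x) := by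
  obtain rfl : p = fun x => β₁ * x ^ (β₁ - 1) := funext hp
  obtain rfl : q = fun x => β₂ * x ^ (β₂ - 1) := funext hq
  have hd : 0 < β₂ - β₁ := sub_pos.2 h₁₂
  constructor
  · refine ⟨-β₁ / (β₂ - β₁), div_neg_of_neg_of_pos (neg_neg_of_pos h₁) hd, 2, one_lt_two, ?_⟩
    rintro θ ⟨hθ, -⟩
    have : -β₁ < θ * (β₂ - β₁) := (div_lt_iff₀ hd).1 hθ
    exact integrableOn_Icc_rpow_weighted_geom_mean h₁.le (h₁.trans h₁₂).le (by linarith)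
  · rintro ⟨a, ha, b, hb, h⟩
    obtain ⟨θ, hθ₁, hθb⟩ := exists_between hb
    exact not_ae_restrict_Icc_of_eventually_nhdsGT one_pos
      ((eventually_linear_mixture_rpow_neg h₁ (by linarith) hθ₁).mono fun x hx => hx.not_gt)
      (h θ ⟨by linarith, hθb⟩)
end

section
/- Let p, q be strictly positive densities. The condition 'log(q/p) belongs to L^{Φ₁}(p) ∩ L^{Φ₁}(q)' (with Φ₁(x)=cosh(x)−1) is equivalent to: there exists ε > 0 such that ∫ (q/p)^{1+ε}·p dμ < ∞ and ∫ (p/q)^{1+ε}·q dμ < ∞. -/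
/-!
With `r = b / a` one has `r ^ (1 + ε) * a = r ^ ε * b`, and `exp (ε * |log r|)` lies between
`max (r ^ ε) (r ^ (-ε))` and `r ^ ε + r ^ (-ε)`. Hence the `(1 + ε)`-moment of `q / p` under `p`
is dominated by the exponential moment of `|log (q / p)|` under `q` and vice versa, while
conversely the exponential moment under `p` is dominated by `p` plus the two `(1 + ε)`-moments.
-/

open MeasureTheory Real

lemma abs_log_div_comm (a b : ℝ) : |log (a / b)| = |log (b / a)| := by
  rw [← inv_div b a, log_inv, abs_neg]

lemma rpow_le_exp_mul_abs_log {r t t' : ℝ} (hr : 0 < r) (ht : 0 ≤ t) (htt' : t ≤ t') :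
    r ^ t ≤ exp (t' * |log r|) := by
  rw [rpow_def_of_pos hr, mul_comm, exp_le_exp]
  calc t * log r ≤ t * |log r| := mul_le_mul_of_nonneg_left (le_abs_self _) ht
    _ ≤ t' * |log r| := by gcongr

lemma exp_mul_abs_log_le_rpow_add_rpow_neg {r t : ℝ} (hr : 0 < r) (ht : 0 ≤ t) :
    exp (t * |log r|) ≤ r ^ t + r ^ (-t) := by
  rw [rpow_def_of_pos hr, rpow_def_of_pos hr, ← abs_of_nonneg ht, ← abs_mul, abs_of_nonneg ht,
    mul_comm (log r), mul_comm (log r), neg_mul]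
  exact exp_abs_le _

lemma rpow_le_one_add_rpow {r s t : ℝ} (hr : 0 < r) (hs : 0 ≤ s) (hst : s ≤ t) :
    r ^ s ≤ 1 + r ^ t := by
  rcases le_total r 1 with h | h
  · linarith [rpow_le_one hr.le h hs, rpow_nonneg hr.le t]
  · linarith [rpow_le_rpow_of_exponent_le h hst]

lemma div_rpow_one_add_mul {a b : ℝ} (ha : 0 < a) (hb : 0 < b) (ε : ℝ) :
    (b / a) ^ (1 + ε) * a = (b / a) ^ ε * b := by
  rw [add_comm, rpow_add (div_pos hb ha), rpow_one, mul_assoc, div_mul_cancel₀ _ ha.ne']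

lemma div_rpow_one_add_mul_le_exp_mul_abs_log {a b ε α : ℝ} (ha : 0 < a) (hb : 0 < b)
    (hε : 0 ≤ ε) (hεα : ε ≤ α) :
    (b / a) ^ (1 + ε) * a ≤ exp (α * |log (b / a)|) * b := by
  rw [div_rpow_one_add_mul ha hb]
  exact mul_le_mul_of_nonneg_right (rpow_le_exp_mul_abs_log (div_pos hb ha) hε hεα) hb.le

lemma exp_mul_abs_log_mul_le {a b ε : ℝ} (ha : 0 < a) (hb : 0 < b) (hε : 0 ≤ ε) :
    exp (ε * |log (b / a)|) * a ≤ a + (b / a) ^ (1 + ε) * a + (a / b) ^ (1 + ε) * b := by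
  have hr : 0 < b / a := div_pos hb ha
  have h_neg : (b / a) ^ (-ε) * a = (a / b) ^ (1 + ε) * b := by
    rw [div_rpow_one_add_mul hb ha, rpow_neg hr.le, ← inv_rpow hr.le, inv_div]
  calc exp (ε * |log (b / a)|) * a
      ≤ ((b / a) ^ ε + (b / a) ^ (-ε)) * a :=
        mul_le_mul_of_nonneg_right (exp_mul_abs_log_le_rpow_add_rpow_neg hr hε) ha.le
    _ ≤ (1 + (b / a) ^ (1 + ε)) * a + (b / a) ^ (-ε) * a := by
        rw [add_mul]
        gcongr
        exact rpow_le_one_add_rpow hr hε (by linarith)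
    _ = a + (b / a) ^ (1 + ε) * a + (a / b) ^ (1 + ε) * b := by rw [h_neg]; ring

namespace MeasureTheory

variable {X : Type*} [MeasurableSpace X] {μ : Measure X} {a b : X → ℝ}

lemma Integrable.div_rpow_one_add_mul (ha : Measurable a) (hb : Measurable b)
    (ha_pos : ∀ᵐ x ∂μ, 0 < a x) (hb_pos : ∀ᵐ x ∂μ, 0 < b x) {ε α : ℝ} (hε : 0 ≤ ε)
    (hεα : ε ≤ α) (h : Integrable (fun x => exp (α * |log (b x / a x)|) * b x) μ) :
    Integrable (fun x => (b x / a x) ^ (1 + ε) * a x) μ := by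
  refine h.mono' (by fun_prop) ?_
  filter_upwards [ha_pos, hb_pos] with x hax hbx
  rw [norm_of_nonneg (by positivity)]
  exact div_rpow_one_add_mul_le_exp_mul_abs_log hax hbx hε hεα

lemma Integrable.exp_mul_abs_log_div_mul (ha : Measurable a) (hb : Measurable b)
    (ha_pos : ∀ᵐ x ∂μ, 0 < a x) (hb_pos : ∀ᵐ x ∂μ, 0 < b x) {ε : ℝ} (hε : 0 ≤ ε)
    (ha_int : Integrable a μ) (hba : Integrable (fun x => (b x / a x) ^ (1 + ε) * a x) μ)
    (hab : Integrable (fun x => (a x / b x) ^ (1 + ε) * b x) μ) :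
    Integrable (fun x => exp (ε * |log (b x / a x)|) * a x) μ := by
  refine ((ha_int.add hba).add hab).mono' (by fun_prop) ?_
  filter_upwards [ha_pos, hb_pos] with x hax hbx
  rw [norm_of_nonneg (by positivity)]
  exact exp_mul_abs_log_mul_le hax hbx hε

end MeasureTheory

theorem log_ratio_orlicz_iff_moment_conditions_general
    {X : Type*} [MeasurableSpace X] (μ : Measure X)
    (p q : X → ℝ) (hp : Measurable p) (hq : Measurable q)
    (hp_pos : ∀ᵐ x ∂μ, 0 < p x) (hq_pos : ∀ᵐ x ∂μ, 0 < q x)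
    (hp_int : ∫ x, p x ∂μ = 1) (hq_int : ∫ x, q x ∂μ = 1) :
    ((∃ α > (0 : ℝ),
        Integrable (fun x => Real.exp (α * |Real.log (q x / p x)|) * p x) μ) ∧
     (∃ α > (0 : ℝ),
        Integrable (fun x => Real.exp (α * |Real.log (q x / p x)|) * q x) μ)) ↔
    (∃ ε > (0 : ℝ),
      Integrable (fun x => (q x / p x) ^ (1 + ε) * p x) μ ∧
      Integrable (fun x => (p x / q x) ^ (1 + ε) * q x) μ) := by
  constructor
  · rintro ⟨⟨α, hα, h_p⟩, ⟨β, hβ, h_q⟩⟩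
    have hε := (lt_min hα hβ).le
    refine ⟨min α β, lt_min hα hβ, ?_, ?_⟩
    · exact h_q.div_rpow_one_add_mul hp hq hp_pos hq_pos hε (min_le_right α β)
    · refine Integrable.div_rpow_one_add_mul hq hp hq_pos hp_pos hε (min_le_left α β) ?_
      simpa only [abs_log_div_comm (p _)] using h_p
  · rintro ⟨ε, hε, h_qp, h_pq⟩
    refine ⟨⟨ε, hε, ?_⟩, ⟨ε, hε, ?_⟩⟩
    · exact Integrable.exp_mul_abs_log_div_mul hp hq hp_pos hq_pos hε.le
        (integrable_of_integral_eq_one hp_int) h_qp h_pq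
    · simpa only [abs_log_div_comm (p _)] using
        Integrable.exp_mul_abs_log_div_mul hq hp hq_pos hp_pos hε.le
          (integrable_of_integral_eq_one hq_int) h_pq h_qp

/-- `log(q/p) ∈ L^{Φ₁}(p) ∩ L^{Φ₁}(q)` iff there is `ε > 0` with
`∫ (q/p)^{1+ε} p dμ < ∞` and `∫ (p/q)^{1+ε} q dμ < ∞`. -/
theorem log_ratio_orlicz_iff_moment_conditions
    {X : Type*} [MeasurableSpace X] (μ : Measure X) [IsProbabilityMeasure μ]
    (p q : X → ℝ) (hp : Measurable p) (hq : Measurable q)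
    (hp_pos : ∀ᵐ x ∂μ, 0 < p x) (hq_pos : ∀ᵐ x ∂μ, 0 < q x)
    (hp_int : ∫ x, p x ∂μ = 1) (hq_int : ∫ x, q x ∂μ = 1) :
    ((∃ α > (0 : ℝ),
        Integrable (fun x => Real.exp (α * |Real.log (q x / p x)|) * p x) μ) ∧
     (∃ α > (0 : ℝ),
        Integrable (fun x => Real.exp (α * |Real.log (q x / p x)|) * q x) μ)) ↔
    (∃ ε > (0 : ℝ),
      Integrable (fun x => (q x / p x) ^ (1 + ε) * p x) μ ∧
      Integrable (fun x => (p x / q x) ^ (1 + ε) * q x) μ) :=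
  log_ratio_orlicz_iff_moment_conditions_general μ p q hp hq hp_pos hq_pos hp_int hq_int
end

section
/- Let p, q be strictly positive densities. If there exists ε > 0 such that ∫ (q/p)^{1+ε}·p dμ < ∞ and ∫ (q/p)^{−ε}·p dμ < ∞, then p and q are connected by an open exponential arc: ∫ p^{1−θ}q^{θ} dμ < ∞ for all θ in an open interval containing [0,1]. -/
/-!
Writing `r = q / p`, one has `p ^ (1 - θ) * q ^ θ = r ^ θ * p`, and for `r > 0` the map
`θ ↦ r ^ θ` is dominated on `[-ε, 1 + ε]` by `r ^ (-ε) + r ^ (1 + ε)`: the first term wins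
where `r ≤ 1`, the second where `r ≥ 1`. The two moment conditions therefore give integrability
of every `p ^ (1 - θ) * q ^ θ` with `θ ∈ (-ε, 1 + ε)`.
-/

open MeasureTheory Real Set

lemma Real.rpow_le_rpow_add_rpow_of_mem_Icc {r a b θ : ℝ} (hr : 0 < r) (hθ : θ ∈ Icc a b) :
    r ^ θ ≤ r ^ a + r ^ b := by
  rcases le_total r 1 with h | h
  · linarith [rpow_le_rpow_of_exponent_ge hr h hθ.1, rpow_nonneg hr.le b]
  · linarith [rpow_le_rpow_of_exponent_le h hθ.2, rpow_nonneg hr.le a]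

lemma Real.rpow_one_sub_mul_rpow {p q : ℝ} (hp : 0 < p) (hq : 0 ≤ q) (θ : ℝ) :
    p ^ (1 - θ) * q ^ θ = (q / p) ^ θ * p := by
  rw [div_rpow hq hp.le, rpow_sub hp, rpow_one]
  field_simp

lemma MeasureTheory.Integrable.rpow_mul_of_mem_Icc {X : Type*} [MeasurableSpace X]
    {μ : Measure X} {r w : X → ℝ} {a b θ : ℝ} (hr : Measurable r) (hw : Measurable w)
    (hr_pos : ∀ᵐ x ∂μ, 0 < r x) (hw_nonneg : ∀ᵐ x ∂μ, 0 ≤ w x)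
    (ha : Integrable (fun x => r x ^ a * w x) μ) (hb : Integrable (fun x => r x ^ b * w x) μ)
    (hθ : θ ∈ Icc a b) :
    Integrable (fun x => r x ^ θ * w x) μ := by
  refine (ha.add hb).mono (by fun_prop) ?_
  filter_upwards [hr_pos, hw_nonneg] with x hrx hwx
  have hbound : r x ^ θ * w x ≤ r x ^ a * w x + r x ^ b * w x := by
    rw [← add_mul]
    exact mul_le_mul_of_nonneg_right (rpow_le_rpow_add_rpow_of_mem_Icc hrx hθ) hwx
  have hθw : 0 ≤ r x ^ θ * w x := mul_nonneg (rpow_nonneg hrx.le θ) hwx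
  rw [Pi.add_apply, norm_of_nonneg hθw, norm_of_nonneg (hθw.trans hbound)]
  exact hbound

theorem open_exponential_arc_of_moment_conditions_general
    {X : Type*} [MeasurableSpace X] (μ : Measure X)
    (p q : X → ℝ) (hp : Measurable p) (hq : Measurable q)
    (hp_pos : ∀ᵐ x ∂μ, 0 < p x) (hq_pos : ∀ᵐ x ∂μ, 0 < q x)
    (hmom : ∃ ε > (0 : ℝ),
      Integrable (fun x => (q x / p x) ^ (1 + ε) * p x) μ ∧
      Integrable (fun x => (q x / p x) ^ (-ε) * p x) μ) :
    ∃ a < (0 : ℝ), ∃ b > (1 : ℝ), ∀ θ ∈ Set.Ioo a b,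
      Integrable (fun x => p x ^ (1 - θ) * q x ^ θ) μ := by
  obtain ⟨ε, hε, h_upper, h_lower⟩ := hmom
  refine ⟨-ε, by linarith, 1 + ε, by linarith, fun θ hθ => ?_⟩
  have hratio_pos : ∀ᵐ x ∂μ, 0 < q x / p x := by
    filter_upwards [hp_pos, hq_pos] with x hpx hqx using div_pos hqx hpx
  have hp_nonneg : ∀ᵐ x ∂μ, 0 ≤ p x := hp_pos.mono fun x hx => hx.le
  refine (h_lower.rpow_mul_of_mem_Icc (hq.div hp) hp hratio_pos hp_nonneg h_upper
    (Ioo_subset_Icc_self hθ)).congr ?_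
  filter_upwards [hp_pos, hq_pos] with x hpx hqx
  exact (rpow_one_sub_mul_rpow hpx hqx.le θ).symm

/-- If `∫ (q/p)^{1+ε} p dμ < ∞` and `∫ (q/p)^{−ε} p dμ < ∞` for some `ε > 0`, then `p` and
`q` are connected by an open exponential arc. -/
theorem open_exponential_arc_of_moment_conditions
    {X : Type*} [MeasurableSpace X] (μ : Measure X) [IsProbabilityMeasure μ]
    (p q : X → ℝ) (hp : Measurable p) (hq : Measurable q)
    (hp_pos : ∀ᵐ x ∂μ, 0 < p x) (hq_pos : ∀ᵐ x ∂μ, 0 < q x)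
    (hp_int : ∫ x, p x ∂μ = 1) (hq_int : ∫ x, q x ∂μ = 1)
    (hmom : ∃ ε > (0 : ℝ),
      Integrable (fun x => (q x / p x) ^ (1 + ε) * p x) μ ∧
      Integrable (fun x => (q x / p x) ^ (-ε) * p x) μ) :
    ∃ a < (0 : ℝ), ∃ b > (1 : ℝ), ∀ θ ∈ Set.Ioo a b,
      Integrable (fun x => p x ^ (1 - θ) * q x ^ θ) μ :=
  open_exponential_arc_of_moment_conditions_general μ p q hp hq hp_pos hq_pos hmom
end

section
/- Let p, q be strictly positive densities connected by an open exponential arc, i.e., ∫ (q/p)^θ·p dμ < ∞ for all θ in an open interval I ⊃ [0,1]. Then for every λ ∈ [0,1] the mixture p(λ) = λ·p + (1−λ)·q is also connected to p by an open exponential arc. In particular, the maximal exponential model E(p) is convex. -/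
/-!
The mixture `m = λ p + (1 - λ) q` lies between `p` and `q`, so for every exponent `θ` one has
`m ^ θ ≤ max (p ^ θ) (q ^ θ) ≤ p ^ θ + q ^ θ` (upper bound of `m` for `θ ≥ 0`, lower bound for
`θ ≤ 0`). Multiplying by `p ^ (1 - θ)` gives `m ^ θ p ^ (1 - θ) ≤ p + (q / p) ^ θ p`, whose right
side is integrable on the whole arc `θ ∈ (a, b)` of `q`; hence the same interval works for `m`.
-/

open MeasureTheory Real Set

namespace Real

theorem rpow_le_rpow_add_rpow_of_mem_uIcc {x y z : ℝ} (hx : 0 < x) (hy : 0 < y)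
    (hz : z ∈ uIcc x y) (θ : ℝ) : z ^ θ ≤ x ^ θ + y ^ θ := by
  have hx' : 0 ≤ x ^ θ := rpow_nonneg hx.le θ
  have hy' : 0 ≤ y ^ θ := rpow_nonneg hy.le θ
  have hz_pos : 0 < z := lt_of_lt_of_le (lt_min hx hy) hz.1
  rcases le_total 0 θ with hθ | hθ
  · rcases le_max_iff.mp hz.2 with hzx | hzy
    · linarith [rpow_le_rpow hz_pos.le hzx hθ]
    · linarith [rpow_le_rpow hz_pos.le hzy hθ]
  · rcases min_le_iff.mp hz.1 with hxz | hyz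
    · linarith [rpow_le_rpow_of_nonpos hx hxz hθ]
    · linarith [rpow_le_rpow_of_nonpos hy hyz hθ]

theorem rpow_mul_rpow_one_sub {p q : ℝ} (hp : 0 < p) (hq : 0 ≤ q) (θ : ℝ) :
    q ^ θ * p ^ (1 - θ) = (q / p) ^ θ * p := by
  rw [rpow_sub hp, rpow_one, div_rpow hq hp.le]
  field_simp

end Real

theorem integrable_mixture_rpow_mul_rpow_one_sub {X : Type*} [MeasurableSpace X]
    {μ : Measure X} {p q : X → ℝ} (hp : Measurable p) (hq : Measurable q)
    (hp_pos : ∀ᵐ x ∂μ, 0 < p x) (hq_pos : ∀ᵐ x ∂μ, 0 < q x) (hp_int : Integrable p μ)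
    {θ : ℝ} (hqθ : Integrable (fun x => (q x / p x) ^ θ * p x) μ) {lam : ℝ}
    (hlam : lam ∈ Icc (0 : ℝ) 1) :
    Integrable (fun x => (lam * p x + (1 - lam) * q x) ^ θ * p x ^ (1 - θ)) μ := by
  refine (hp_int.add hqθ).mono' (by fun_prop) ?_
  filter_upwards [hp_pos, hq_pos] with x hpx hqx
  have hmix : lam * p x + (1 - lam) * q x ∈ uIcc (p x) (q x) :=
    convex_uIcc (p x) (q x) left_mem_uIcc right_mem_uIcc hlam.1 (sub_nonneg.mpr hlam.2)
      (add_sub_cancel lam 1)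
  have hpθ : 0 ≤ p x ^ (1 - θ) := rpow_nonneg hpx.le _
  rw [norm_of_nonneg (mul_nonneg (rpow_nonneg (hmix.1.trans' (le_min hpx.le hqx.le)) θ) hpθ)]
  calc (lam * p x + (1 - lam) * q x) ^ θ * p x ^ (1 - θ)
      ≤ (p x ^ θ + q x ^ θ) * p x ^ (1 - θ) :=
        mul_le_mul_of_nonneg_right (rpow_le_rpow_add_rpow_of_mem_uIcc hpx hqx hmix θ) hpθ
    _ = p x + (q x / p x) ^ θ * p x := by
        rw [add_mul, rpow_mul_rpow_one_sub hpx hqx.le, rpow_mul_rpow_one_sub hpx hpx.le,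
          div_self hpx.ne', one_rpow, one_mul]

theorem maximal_exponential_model_convex_general
    {X : Type*} [MeasurableSpace X] (μ : Measure X)
    (p q : X → ℝ) (hp : Measurable p) (hq : Measurable q)
    (hp_pos : ∀ᵐ x ∂μ, 0 < p x) (hq_pos : ∀ᵐ x ∂μ, 0 < q x)
    (a b : ℝ) (ha : a < 0) (hb : 1 < b)
    (harc : ∀ θ ∈ Set.Ioo a b, Integrable (fun x => (q x / p x) ^ θ * p x) μ) :
    ∀ lam ∈ Set.Icc (0 : ℝ) 1,
      ∃ a' < (0 : ℝ), ∃ b' > (1 : ℝ), ∀ θ ∈ Set.Ioo a' b',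
        Integrable (fun x => (lam * p x + (1 - lam) * q x) ^ θ * p x ^ (1 - θ)) μ := by
  have hp_int : Integrable p μ := by
    simpa using harc 0 ⟨ha, by linarith⟩
  intro lam hlam
  exact ⟨a, ha, b, hb, fun θ hθ =>
    integrable_mixture_rpow_mul_rpow_one_sub hp hq hp_pos hq_pos hp_int (harc θ hθ) hlam⟩

/-- If `p` and `q` are connected by an open exponential arc, then every mixture
`λ·p + (1−λ)·q`, `λ ∈ [0,1]`, is connected to `p` by an open exponential arc
(convexity of the maximal exponential model). -/
theorem maximal_exponential_model_convex
    {X : Type*} [MeasurableSpace X] (μ : Measure X) [IsProbabilityMeasure μ]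
    (p q : X → ℝ) (hp : Measurable p) (hq : Measurable q)
    (hp_pos : ∀ᵐ x ∂μ, 0 < p x) (hq_pos : ∀ᵐ x ∂μ, 0 < q x)
    (hp_int : ∫ x, p x ∂μ = 1) (hq_int : ∫ x, q x ∂μ = 1)
    (a b : ℝ) (ha : a < 0) (hb : 1 < b)
    (harc : ∀ θ ∈ Set.Ioo a b, Integrable (fun x => (q x / p x) ^ θ * p x) μ) :
    ∀ lam ∈ Set.Icc (0 : ℝ) 1,
      ∃ a' < (0 : ℝ), ∃ b' > (1 : ℝ), ∀ θ ∈ Set.Ioo a' b',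
        Integrable (fun x => (lam * p x + (1 - lam) * q x) ^ θ * p x ^ (1 - θ)) μ :=
  maximal_exponential_model_convex_general μ p q hp hq hp_pos hq_pos a b ha hb harc
end

section
/- Let p, q be strictly positive densities connected by an open exponential arc and let λ ∈ [0,1], r = λp + (1−λ)q. Then for θ ∈ (0,1), ∫ r^θ·p^{1−θ} dμ ≤ 1, and for θ outside [0,1] but within the interval of the arc, ∫ r^θ·p^{1−θ} dμ ≤ λ + (1−λ)·∫ (q/p)^θ·p dμ < ∞. -/
/-!
Write `r = λp + (1−λ)q`. For `θ ∈ [0,1]` the weighted AM–GM inequality gives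
`r^θ p^{1−θ} ≤ θ r + (1−θ) p`, whose integral is `1`. For `θ ∉ (0,1)` the map `t ↦ t^θ` is
convex on `(0,∞)`, so pointwise
`r^θ p^{1−θ} = (λ + (1−λ) q/p)^θ p ≤ (λ + (1−λ) (q/p)^θ) p`,
and the right-hand side is integrable because `θ` lies on the exponential arc.
-/

open MeasureTheory Real Set

namespace Real

theorem convexOn_rpow_of_nonpos {p : ℝ} (hp : p ≤ 0) : ConvexOn ℝ (Ioi 0) fun x : ℝ ↦ x ^ p := by
  refine ⟨convex_Ioi 0, fun x (hx : 0 < x) y (hy : 0 < y) a b ha hb hab ↦ ?_⟩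
  calc (a • x + b • y) ^ p ≤ (x ^ a * y ^ b) ^ p :=
        rpow_le_rpow_of_nonpos (by positivity)
          (geom_mean_le_arith_mean2_weighted ha hb hx.le hy.le hab) hp
    _ = (x ^ p) ^ a * (y ^ p) ^ b := by
        rw [mul_rpow (by positivity) (by positivity), ← rpow_mul hx.le, ← rpow_mul hy.le,
          ← rpow_mul hx.le, ← rpow_mul hy.le, mul_comm a, mul_comm b]
    _ ≤ a • x ^ p + b • y ^ p :=
        geom_mean_le_arith_mean2_weighted ha hb (by positivity) (by positivity) hab

theorem convexOn_rpow_of_notMem_Ioo {p : ℝ} (hp : p ∉ Ioo 0 1) :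
    ConvexOn ℝ (Ioi 0) fun x : ℝ ↦ x ^ p := by
  rcases le_or_gt p 0 with hp0 | hp0
  · exact convexOn_rpow_of_nonpos hp0
  · exact (convexOn_rpow (not_lt.1 fun h ↦ hp ⟨hp0, h⟩)).subset Ioi_subset_Ici_self
      (convex_Ioi 0)

theorem rpow_mul_rpow_one_sub_s16 {x y : ℝ} (hx : 0 ≤ x) (hy : 0 < y) (θ : ℝ) :
    x ^ θ * y ^ (1 - θ) = (x / y) ^ θ * y := by
  rw [div_rpow hx hy.le, rpow_sub hy, rpow_one]
  field_simp

theorem mixture_rpow_mul_rpow_one_sub_le {θ lam x y : ℝ} (hθ : θ ∉ Ioo 0 1)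
    (hlam : lam ∈ Icc (0 : ℝ) 1) (hx : 0 < x) (hy : 0 < y) :
    (lam * x + (1 - lam) * y) ^ θ * x ^ (1 - θ) ≤ lam * x + (1 - lam) * ((y / x) ^ θ * x) := by
  have hconv := (convexOn_rpow_of_notMem_Ioo hθ).2 (mem_Ioi.2 one_pos)
    (mem_Ioi.2 (div_pos hy hx)) hlam.1 (sub_nonneg.2 hlam.2) (add_sub_cancel lam 1)
  simp only [smul_eq_mul, mul_one, one_rpow] at hconv
  have hmix : (lam * x + (1 - lam) * y) / x = lam + (1 - lam) * (y / x) := by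
    field_simp
  calc (lam * x + (1 - lam) * y) ^ θ * x ^ (1 - θ)
      = (lam + (1 - lam) * (y / x)) ^ θ * x := by
        rw [rpow_mul_rpow_one_sub_s16 (by nlinarith [hlam.1, hlam.2]) hx, hmix]
    _ ≤ (lam + (1 - lam) * (y / x) ^ θ) * x := mul_le_mul_of_nonneg_right hconv hx.le
    _ = lam * x + (1 - lam) * ((y / x) ^ θ * x) := by ring

end Real

section

variable {X : Type*} [MeasurableSpace X] {μ : Measure X} {f g : X → ℝ}

theorem integral_rpow_mul_rpow_one_sub_le (hf : 0 ≤ᵐ[μ] f) (hg : 0 ≤ᵐ[μ] g)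
    (hfi : Integrable f μ) (hgi : Integrable g μ) {θ : ℝ} (hθ : θ ∈ Icc (0 : ℝ) 1) :
    ∫ x, f x ^ θ * g x ^ (1 - θ) ∂μ ≤ θ * ∫ x, f x ∂μ + (1 - θ) * ∫ x, g x ∂μ := by
  have hmean : Integrable (fun x ↦ θ * f x + (1 - θ) * g x) μ :=
    (hfi.const_mul θ).add (hgi.const_mul (1 - θ))
  rw [← integral_const_mul, ← integral_const_mul, ← integral_add (hfi.const_mul θ)
    (hgi.const_mul (1 - θ))]
  refine integral_mono_of_nonneg ?_ hmean ?_ <;> filter_upwards [hf, hg] with x hfx hgx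
  · exact mul_nonneg (rpow_nonneg hfx _) (rpow_nonneg hgx _)
  · exact geom_mean_le_arith_mean2_weighted hθ.1 (sub_nonneg.2 hθ.2) hfx hgx (by ring)

theorem integrable_mixture_rpow_mul_rpow_one_sub_and_integral_le {θ lam : ℝ}
    (hθ : θ ∉ Ioo 0 1) (hlam : lam ∈ Icc (0 : ℝ) 1)
    (hf : ∀ᵐ x ∂μ, 0 < f x) (hg : ∀ᵐ x ∂μ, 0 < g x) (hfi : Integrable f μ)
    (hgm : AEMeasurable g μ) (hθi : Integrable (fun x ↦ (g x / f x) ^ θ * f x) μ) :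
    Integrable (fun x ↦ (lam * f x + (1 - lam) * g x) ^ θ * f x ^ (1 - θ)) μ ∧
      ∫ x, (lam * f x + (1 - lam) * g x) ^ θ * f x ^ (1 - θ) ∂μ ≤
        lam * ∫ x, f x ∂μ + (1 - lam) * ∫ x, (g x / f x) ^ θ * f x ∂μ := by
  have hbound : Integrable (fun x ↦ lam * f x + (1 - lam) * ((g x / f x) ^ θ * f x)) μ :=
    (hfi.const_mul lam).add (hθi.const_mul (1 - lam))
  have hle : ∀ᵐ x ∂μ, (lam * f x + (1 - lam) * g x) ^ θ * f x ^ (1 - θ) ≤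
      lam * f x + (1 - lam) * ((g x / f x) ^ θ * f x) := by
    filter_upwards [hf, hg] with x hfx hgx
    exact mixture_rpow_mul_rpow_one_sub_le hθ hlam hfx hgx
  have hnonneg : ∀ᵐ x ∂μ, 0 ≤ (lam * f x + (1 - lam) * g x) ^ θ * f x ^ (1 - θ) := by
    filter_upwards [hf, hg] with x hfx hgx
    have : 0 ≤ lam * f x + (1 - lam) * g x := by nlinarith [hlam.1, hlam.2]
    positivity
  have hmeas : AEStronglyMeasurable
      (fun x ↦ (lam * f x + (1 - lam) * g x) ^ θ * f x ^ (1 - θ)) μ := by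
    have hfm := hfi.aemeasurable
    exact (((hfm.const_mul lam).add (hgm.const_mul _)).pow_const θ).mul
      (hfm.pow_const _) |>.aestronglyMeasurable
  refine ⟨hbound.mono' hmeas ?_, (integral_mono_of_nonneg hnonneg hbound hle).trans_eq ?_⟩
  · filter_upwards [hle, hnonneg] with x hx hx0
    rwa [norm_of_nonneg hx0]
  · rw [integral_add (hfi.const_mul lam) (hθi.const_mul (1 - lam)), integral_const_mul,
      integral_const_mul]

end

theorem mixture_power_integral_bounds_general
    {X : Type*} [MeasurableSpace X] (μ : Measure X)
    (p q : X → ℝ)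
    (hp_pos : ∀ᵐ x ∂μ, 0 < p x) (hq_pos : ∀ᵐ x ∂μ, 0 < q x)
    (hp_int : ∫ x, p x ∂μ = 1) (hq_int : ∫ x, q x ∂μ = 1)
    (a b : ℝ) (ha : a < 0) (hb : 1 < b)
    (harc : ∀ θ ∈ Set.Ioo a b, Integrable (fun x => (q x / p x) ^ θ * p x) μ)
    (lam : ℝ) (hlam : lam ∈ Set.Icc (0 : ℝ) 1)
    (r : X → ℝ) (hr : ∀ x, r x = lam * p x + (1 - lam) * q x) :
    (∀ θ ∈ Set.Ioo (0 : ℝ) 1, ∫ x, r x ^ θ * p x ^ (1 - θ) ∂μ ≤ 1) ∧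
    (∀ θ ∈ Set.Ioo a b, θ ∉ Set.Icc (0 : ℝ) 1 →
      Integrable (fun x => r x ^ θ * p x ^ (1 - θ)) μ ∧
      ∫ x, r x ^ θ * p x ^ (1 - θ) ∂μ ≤ lam + (1 - lam) * ∫ x, (q x / p x) ^ θ * p x ∂μ) := by
  obtain rfl : r = fun x ↦ lam * p x + (1 - lam) * q x := funext hr
  have hpi : Integrable p μ := by simpa using harc 0 ⟨ha, zero_lt_one.trans hb⟩
  have hqi : Integrable q μ := (harc 1 ⟨ha.trans one_pos, hb⟩).congr <| by
    filter_upwards [hp_pos] with x hx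
    rw [rpow_one, div_mul_cancel₀ _ hx.ne']
  refine ⟨fun θ hθ ↦ ?_, fun θ hθ hθ01 ↦ ?_⟩
  · have hmix_int : ∫ x, lam * p x + (1 - lam) * q x ∂μ = 1 := by
      rw [integral_add (hpi.const_mul lam) (hqi.const_mul _), integral_const_mul,
        integral_const_mul, hp_int, hq_int]
      ring
    have hmix_pos : ∀ᵐ x ∂μ, 0 ≤ lam * p x + (1 - lam) * q x := by
      filter_upwards [hp_pos, hq_pos] with x hpx hqx
      nlinarith [hlam.1, hlam.2]
    calc _ ≤ θ * ∫ x, lam * p x + (1 - lam) * q x ∂μ + (1 - θ) * ∫ x, p x ∂μ :=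
          integral_rpow_mul_rpow_one_sub_le hmix_pos (hp_pos.mono fun x hx ↦ hx.le)
            ((hpi.const_mul lam).add (hqi.const_mul _)) hpi (Ioo_subset_Icc_self hθ)
      _ = 1 := by rw [hmix_int, hp_int]; ring
  · have hθ' : θ ∉ Ioo 0 1 := fun h ↦ hθ01 (Ioo_subset_Icc_self h)
    simpa [hp_int] using integrable_mixture_rpow_mul_rpow_one_sub_and_integral_le hθ' hlam
      hp_pos hq_pos hpi hqi.aemeasurable (harc θ hθ)

/-- Quantitative bounds for the mixture `r = λp + (1−λ)q` along an open exponential arc: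
for `θ ∈ (0,1)`, `∫ r^θ p^{1−θ} dμ ≤ 1`; for `θ` in the interval of the arc but outside
`[0,1]`, `∫ r^θ p^{1−θ} dμ ≤ λ + (1−λ)·∫ (q/p)^θ p dμ < ∞`. -/
theorem mixture_power_integral_bounds
    {X : Type*} [MeasurableSpace X] (μ : Measure X) [IsProbabilityMeasure μ]
    (p q : X → ℝ) (hp : Measurable p) (hq : Measurable q)
    (hp_pos : ∀ᵐ x ∂μ, 0 < p x) (hq_pos : ∀ᵐ x ∂μ, 0 < q x)
    (hp_int : ∫ x, p x ∂μ = 1) (hq_int : ∫ x, q x ∂μ = 1)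
    (a b : ℝ) (ha : a < 0) (hb : 1 < b)
    (harc : ∀ θ ∈ Set.Ioo a b, Integrable (fun x => (q x / p x) ^ θ * p x) μ)
    (lam : ℝ) (hlam : lam ∈ Set.Icc (0 : ℝ) 1)
    (r : X → ℝ) (hr : ∀ x, r x = lam * p x + (1 - lam) * q x) :
    (∀ θ ∈ Set.Ioo (0 : ℝ) 1, ∫ x, r x ^ θ * p x ^ (1 - θ) ∂μ ≤ 1) ∧
    (∀ θ ∈ Set.Ioo a b, θ ∉ Set.Icc (0 : ℝ) 1 →
      Integrable (fun x => r x ^ θ * p x ^ (1 - θ)) μ ∧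
      ∫ x, r x ^ θ * p x ^ (1 - θ) ∂μ ≤ lam + (1 - lam) * ∫ x, (q x / p x) ^ θ * p x ∂μ) :=
  mixture_power_integral_bounds_general μ p q hp_pos hq_pos hp_int hq_int a b ha hb harc lam hlam r
    hr
end

section
/- For any strictly positive density p on a probability space (X, F, μ), the open mixture model M(p) = {q strictly positive density : q/p and p/q are essentially bounded} is dense in the set of all (nonnegative) probability densities with respect to the L¹(μ) topology. -/
/-!
By dominated convergence `∫ min q (n p) → ∫ q = 1`; shrinking this truncation by a factor
`1 - t` gives `f` with `0 ≤ f ≤ min q (n p)` and mass `1 - c` for some small `c > 0`. Adding the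
missing mass back as `c p` yields a density `r = f + c p` with `c ≤ r / p ≤ n + c`, and since
`|r - q| ≤ (q - f) + c p`, its `L¹` distance to `q` is at most `2 c`.
-/

open MeasureTheory Filter Topology Set

namespace MeasureTheory

variable {X : Type*} [MeasurableSpace X] {μ : Measure X}

noncomputable def fillMass (μ : Measure X) (p f : X → ℝ) (x : X) : ℝ :=
  f x + (1 - ∫ y, f y ∂μ) * p x

theorem integral_fillMass {p f : X → ℝ} (hp : Integrable p μ) (hf : Integrable f μ)
    (hp1 : ∫ x, p x ∂μ = 1) : ∫ x, fillMass μ p f x ∂μ = 1 := by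
  unfold fillMass
  rw [integral_add hf (hp.const_mul _), integral_const_mul, hp1]
  ring

theorem integral_abs_fillMass_sub_le {p q f : X → ℝ} (hp : Integrable p μ) (hq : Integrable q μ)
    (hf : Integrable f μ) (hp_nonneg : 0 ≤ᵐ[μ] p) (hfq : f ≤ᵐ[μ] q)
    (hp1 : ∫ x, p x ∂μ = 1) (hq1 : ∫ x, q x ∂μ = 1) :
    ∫ x, |fillMass μ p f x - q x| ∂μ ≤ 2 * (1 - ∫ x, f x ∂μ) := by
  set c := 1 - ∫ x, f x ∂μ
  have hc : 0 ≤ c := sub_nonneg.mpr (hq1 ▸ integral_mono_ae hf hq hfq)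
  have hbound : Integrable (fun x => q x - f x + c * p x) μ := (hq.sub hf).add (hp.const_mul c)
  calc ∫ x, |fillMass μ p f x - q x| ∂μ ≤ ∫ x, q x - f x + c * p x ∂μ := by
        refine integral_mono_of_nonneg (ae_of_all _ fun _ => abs_nonneg _) hbound ?_
        filter_upwards [hp_nonneg, hfq] with x (hpx : 0 ≤ p x) hfqx
        rw [fillMass, abs_le]
        constructor <;> nlinarith [mul_nonneg hc hpx]
    _ = 2 * c := by
        rw [integral_add (f := fun x => q x - f x) (hq.sub hf) (hp.const_mul c),
          integral_sub hq hf, integral_const_mul, hp1, hq1]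
        ring

theorem tendsto_integral_min_natCast_mul {p q : X → ℝ} (hp : AEStronglyMeasurable p μ)
    (hp_pos : ∀ᵐ x ∂μ, 0 < p x) (hq : Integrable q μ) (hq_nonneg : 0 ≤ᵐ[μ] q) :
    Tendsto (fun n : ℕ => ∫ x, min (q x) (n * p x) ∂μ) atTop (𝓝 (∫ x, q x ∂μ)) := by
  refine tendsto_integral_of_dominated_convergence q
    (fun n => hq.aestronglyMeasurable.inf (hp.const_mul _)) hq ?_ ?_
  · intro n
    filter_upwards [hq_nonneg, hp_pos] with x hqx hpx
    rw [Real.norm_eq_abs, abs_of_nonneg (le_min hqx (by positivity))]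
    exact min_le_left _ _
  · filter_upwards [hp_pos] with x hpx
    have h : Tendsto (fun n : ℕ => (n : ℝ) * p x) atTop atTop :=
      tendsto_natCast_atTop_atTop.atTop_mul_const hpx
    refine tendsto_const_nhds.congr' ?_
    filter_upwards [h.eventually_ge_atTop (q x)] with n hn
    exact (min_eq_left hn).symm

theorem exists_le_natCast_mul_integral_mem_Ioo {p q : X → ℝ} (hp : Measurable p)
    (hp_pos : ∀ᵐ x ∂μ, 0 < p x) (hq : Measurable q) (hqi : Integrable q μ)
    (hq_nonneg : 0 ≤ᵐ[μ] q) (hq_pos : 0 < ∫ x, q x ∂μ) {δ : ℝ} (hδ : 0 < δ) :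
    ∃ (n : ℕ) (f : X → ℝ), Measurable f ∧ Integrable f μ ∧
      (∀ᵐ x ∂μ, 0 ≤ f x ∧ f x ≤ q x ∧ f x ≤ n * p x) ∧
      ∫ x, f x ∂μ ∈ Ioo (∫ x, q x ∂μ - δ) (∫ x, q x ∂μ) := by
  obtain ⟨n, hn⟩ : ∃ n : ℕ, ∫ x, q x ∂μ - δ / 2 < ∫ x, min (q x) (n * p x) ∂μ :=
    ((tendsto_integral_min_natCast_mul hp.aestronglyMeasurable hp_pos hqi hq_nonneg).eventually
      (lt_mem_nhds (by linarith))).exists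
  set g := fun x => min (q x) (n * p x)
  have hg : ∀ᵐ x ∂μ, 0 ≤ g x ∧ g x ≤ q x ∧ g x ≤ n * p x := by
    filter_upwards [hq_nonneg, hp_pos] with x (hqx : 0 ≤ q x) hpx
    exact ⟨le_min hqx (by positivity), min_le_left _ _, min_le_right _ _⟩
  have hgi : Integrable g μ :=
    hqi.mono (hq.min (measurable_const.mul hp)).aestronglyMeasurable <| by
      filter_upwards [hq_nonneg, hg] with x (hqx : 0 ≤ q x) hgx
      rw [Real.norm_of_nonneg hgx.1, Real.norm_of_nonneg hqx]
      exact hgx.2.1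
  have hgq : ∫ x, g x ∂μ ≤ ∫ x, q x ∂μ := integral_mono_ae hgi hqi (hg.mono fun _ h => h.2.1)
  -- shrinking by `1 - t` makes the mass strictly smaller than `∫ q`, at a cost of `t ∫ q ≤ δ / 2`
  set t := min (1 / 2) (δ / (2 * ∫ x, q x ∂μ))
  have ht : 0 < t := by positivity
  have ht1 : t ≤ 1 / 2 := min_le_left _ _
  have htq : t * ∫ x, q x ∂μ ≤ δ / 2 := by
    have : t ≤ δ / (2 * ∫ x, q x ∂μ) := min_le_right _ _
    rw [le_div_iff₀ (by positivity)] at this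
    linarith
  refine ⟨n, fun x => (1 - t) * g x, measurable_const.mul (hq.min (measurable_const.mul hp)),
    hgi.const_mul _, ?_, ?_⟩
  · filter_upwards [hg] with x ⟨hg0, hgqx, hgp⟩
    refine ⟨mul_nonneg (by linarith) hg0, ?_, ?_⟩ <;> nlinarith
  · rw [integral_const_mul]
    constructor <;> nlinarith

theorem ae_fillMass_div_mem_Ioo {p f : X → ℝ} {n : ℝ} (hp_pos : ∀ᵐ x ∂μ, 0 < p x)
    (hf : ∀ᵐ x ∂μ, 0 ≤ f x ∧ f x ≤ n * p x) (hc : 0 < 1 - ∫ x, f x ∂μ) :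
    ∀ᵐ x ∂μ, fillMass μ p f x / p x ∈ Ioo ((1 - ∫ x, f x ∂μ) / 2) (n + 2) := by
  have hf_int_nonneg : 0 ≤ ∫ x, f x ∂μ := integral_nonneg_of_ae (hf.mono fun _ h => h.1)
  filter_upwards [hp_pos, hf] with x hpx ⟨hf0, hfn⟩
  rw [fillMass, add_div, mul_div_cancel_right₀ _ hpx.ne']
  have : f x / p x ≤ n := (div_le_iff₀ hpx).mpr hfn
  constructor <;> linarith [div_nonneg hf0 hpx.le]

end MeasureTheory

theorem open_mixture_model_dense_L1_general
    {X : Type*} [MeasurableSpace X] (μ : Measure X)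
    (p : X → ℝ) (hp : Measurable p) (hp_pos : ∀ᵐ x ∂μ, 0 < p x)
    (hp_int : ∫ x, p x ∂μ = 1) :
    ∀ q : X → ℝ, Measurable q → (∀ᵐ x ∂μ, 0 ≤ q x) → (∫ x, q x ∂μ = 1) →
      ∀ ε > (0 : ℝ), ∃ r : X → ℝ,
        Measurable r ∧ (∀ᵐ x ∂μ, 0 < r x) ∧ (∫ x, r x ∂μ = 1) ∧
        (∃ c₁ c₂ : ℝ, 0 < c₁ ∧ c₁ < c₂ ∧ ∀ᵐ x ∂μ, c₁ < r x / p x ∧ r x / p x < c₂) ∧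
        ∫ x, |r x - q x| ∂μ < ε := by
  intro q hq hq_nonneg hq1 ε hε
  have hpi : Integrable p μ := .of_integral_ne_zero (by simp [hp_int])
  have hqi : Integrable q μ := .of_integral_ne_zero (by simp [hq1])
  obtain ⟨n, f, hf_meas, hfi, hf, hf_gt, hf_lt⟩ := exists_le_natCast_mul_integral_mem_Ioo hp
    hp_pos hq hqi hq_nonneg (hq1 ▸ one_pos) (half_pos hε)
  rw [hq1] at hf_gt hf_lt
  have hc : 0 < 1 - ∫ x, f x ∂μ := by linarith
  have hratio := ae_fillMass_div_mem_Ioo hp_pos (hf.mono fun _ h => ⟨h.1, h.2.2⟩) hc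
  refine ⟨fillMass μ p f, hf_meas.add (measurable_const.mul hp), ?_,
    integral_fillMass hpi hfi hp_int, ⟨_, _, half_pos hc, ?_, hratio⟩, ?_⟩
  · filter_upwards [hp_pos, hratio] with x hpx hx
    exact (div_pos_iff_of_pos_right hpx).mp ((half_pos hc).trans hx.1)
  · linarith [n.cast_nonneg (α := ℝ), integral_nonneg_of_ae (hf.mono fun _ h => h.1)]
  · calc ∫ x, |fillMass μ p f x - q x| ∂μ ≤ 2 * (1 - ∫ x, f x ∂μ) :=
          integral_abs_fillMass_sub_le hpi hqi hfi (hp_pos.mono fun _ h => h.le)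
            (hf.mono fun _ h => h.2.1) hp_int hq1
      _ < ε := by linarith

/-- The open mixture model `M(p)` (densities with ratio to `p` bounded above and below by
positive constants) is `L¹(μ)`-dense in the set of all nonnegative probability
densities. -/
theorem open_mixture_model_dense_L1
    {X : Type*} [MeasurableSpace X] (μ : Measure X) [IsProbabilityMeasure μ]
    (p : X → ℝ) (hp : Measurable p) (hp_pos : ∀ᵐ x ∂μ, 0 < p x)
    (hp_int : ∫ x, p x ∂μ = 1) :
    ∀ q : X → ℝ, Measurable q → (∀ᵐ x ∂μ, 0 ≤ q x) → (∫ x, q x ∂μ = 1) →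
      ∀ ε > (0 : ℝ), ∃ r : X → ℝ,
        Measurable r ∧ (∀ᵐ x ∂μ, 0 < r x) ∧ (∫ x, r x ∂μ = 1) ∧
        (∃ c₁ c₂ : ℝ, 0 < c₁ ∧ c₁ < c₂ ∧ ∀ᵐ x ∂μ, c₁ < r x / p x ∧ r x / p x < c₂) ∧
        ∫ x, |r x - q x| ∂μ < ε :=
  open_mixture_model_dense_L1_general μ p hp hp_pos hp_int
end
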